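/- arXiv:2111.12777 — 8 statements merged into one kernel-verified Lean document; each statement's English description precedes it below -/
import Mathlib

section
/- Let U : ℕ → ℝ satisfy U(0) = 0 and U ∈ D⁰(ℕ₁), i.e. the series ∑_{k=1}^∞ U(k) diverges while ∑_{k=1}^∞ |U(k+1) − U(k)| converges. Let G : ℝ → ℝ be continuous and let x : ℕ → ℝ satisfy the memory-map recurrence x_n = x_0 − ∑_{k=0}^{n−1} G(x_k)·U(n−k) for all n ≥ 1. Suppose for some integer l ≥ 1 the sequence x has asymptotically period-l points x_{lim,1}, …, x_{lim,l}, indexed cyclically modulo l. Then for every index m (cyclically), x_{lim,m+1} − x_{lim,m} = ∑_{j=0}^{l−1} S_{j+1} · G(x_{lim,m−j}), where the indices m+1 and m−j are taken modulo l and the coefficients S_{j+1} are defined by S_{j+1} = ∑_{k=0}^∞ (U(lk+j) − U(lk+j+1)) for 0 ≤ j < l. -/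
open Filter Finset Topology

/-- The differences of consecutive asymptotically period-`l` points of a memory
map with kernel `U ∈ D⁰(ℕ₁)` are given by the sums `S_{j+1}` of the series
`∑ₖ (U(lk+j) − U(lk+j+1))`. Indices of the periodic points are cyclic mod `l`,
which is expressed by periodicity of `xlim`. -/
theorem stmt_1 (U : ℕ → ℝ) (hU0 : U 0 = 0)
    (hdiv : ¬ Summable (fun k : ℕ => U (k + 1)))
    (hconv : Summable (fun k : ℕ => |U (k + 1 + 1) - U (k + 1)|))
    (G : ℝ → ℝ) (hG : Continuous G)
    (x : ℕ → ℝ)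
    (hmap : ∀ n : ℕ, 1 ≤ n → x n = x 0 - ∑ k ∈ Finset.range n, G (x k) * U (n - k))
    (l : ℕ) (hl : 1 ≤ l) (xlim : ℕ → ℝ)
    (hper : ∀ m : ℕ, xlim (m + l) = xlim m)
    (hlim : ∀ m : ℕ, 1 ≤ m → m ≤ l →
      Tendsto (fun N : ℕ => x (N * l + m)) atTop (𝓝 (xlim m))) :
    ∀ m : ℕ, 1 ≤ m → m ≤ l →
      xlim (m + 1) - xlim m =
        ∑ j ∈ Finset.range l,
          (∑' k : ℕ, (U (l * k + j) - U (l * k + j + 1))) * G (xlim (m + l - j)) := by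
  intro m hm1 hml
  haveI : NeZero l := ⟨by omega⟩
  -- Summability of |ΔU|
  have hVsum : Summable (fun i : ℕ => |U i - U (i + 1)|) := by
    have h3 : Summable (fun i : ℕ => |U (i + 1) - U i|) :=
      (summable_nat_add_iff 1).mp hconv
    simpa [abs_sub_comm] using h3
  -- Global bound for |G (x n)|
  obtain ⟨C, hC⟩ : ∃ C, ∀ n, |G (x n)| ≤ C := by
    have hres : ∀ j : ℕ, ∃ D, ∀ N, j < l → |G (x (N * l + (j + 1)))| ≤ D := by
      intro j
      by_cases hj : j < l
      · have hlim' := hlim (j + 1) (by omega) (by omega)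
        have ht : Tendsto (fun N : ℕ => |G (x (N * l + (j + 1)))|) atTop
            (𝓝 |G (xlim (j + 1))|) :=
          ((hG.tendsto _).comp hlim').abs
        obtain ⟨D, hD⟩ := ht.bddAbove_range
        exact ⟨D, fun N _ => hD ⟨N, rfl⟩⟩
      · exact ⟨0, fun N h => absurd h hj⟩
    choose D hD using hres
    refine ⟨|G (x 0)| + ∑ j ∈ Finset.range l, |D j|, fun n => ?_⟩
    rcases Nat.eq_zero_or_pos n with rfl | hn
    · have : (0:ℝ) ≤ ∑ j ∈ Finset.range l, |D j| :=
        Finset.sum_nonneg fun _ _ => abs_nonneg _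
      linarith
    · have hj : (n - 1) % l < l := Nat.mod_lt _ (by omega)
      have hq : l * ((n - 1) / l) + (n - 1) % l = n - 1 := Nat.div_add_mod (n - 1) l
      have hn' : ((n - 1) / l) * l + ((n - 1) % l + 1) = n := by
        have h1 : ((n - 1) / l) * l + ((n - 1) % l + 1)
            = (l * ((n - 1) / l) + (n - 1) % l) + 1 := by ring
        rw [h1, hq]; omega
      have h1 : |G (x n)| ≤ D ((n - 1) % l) := by
        have h0 := hD ((n - 1) % l) ((n - 1) / l) hj
        rwa [hn'] at h0
      have h2 : D ((n - 1) % l) ≤ ∑ j ∈ Finset.range l, |D j| :=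
        le_trans (le_abs_self _)
          (Finset.single_le_sum (fun i _ => abs_nonneg (D i)) (Finset.mem_range.2 hj))
      have h3 : (0:ℝ) ≤ |G (x 0)| := abs_nonneg _
      linarith
  have hC0 : 0 ≤ C := le_trans (abs_nonneg _) (hC 0)
  -- recurrence holds for all n including 0
  have hx : ∀ n, x n = x 0 - ∑ k ∈ Finset.range n, G (x k) * U (n - k) := by
    intro n
    rcases Nat.eq_zero_or_pos n with rfl | hn
    · simp
    · exact hmap n hn
  -- difference formula
  have hdiff : ∀ n, x (n + 1) - x n
      = ∑ k ∈ Finset.range (n + 1), (U (n - k) - U (n - k + 1)) * G (x k) := by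
    intro n
    rw [hx (n + 1), hx n]
    have h1 : ∀ k ∈ Finset.range (n + 1), (U (n - k) - U (n - k + 1)) * G (x k)
        = G (x k) * U (n - k) - G (x k) * U (n + 1 - k) := by
      intro k hk
      have hk' : k ≤ n := by simpa [Nat.lt_succ_iff] using hk
      have h : n + 1 - k = (n - k) + 1 := by omega
      rw [h]; ring
    rw [Finset.sum_congr rfl h1, Finset.sum_sub_distrib]
    have h2 : ∑ k ∈ Finset.range (n + 1), G (x k) * U (n - k)
        = ∑ k ∈ Finset.range n, G (x k) * U (n - k) := by
      rw [Finset.sum_range_succ]; simp [hU0]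
    rw [h2]; ring
  have hdiff' : ∀ n, x (n + 1) - x n
      = ∑ i ∈ Finset.range (n + 1), (U i - U (i + 1)) * G (x (n - i)) := by
    intro n
    rw [hdiff n, ← Finset.sum_range_reflect]
    refine Finset.sum_congr rfl fun k hk => ?_
    have hk' : k ≤ n := by simpa [Nat.lt_succ_iff] using hk
    have h1 : n + 1 - 1 - k = n - k := by omega
    have h2 : n - (n - k) = k := by omega
    rw [h1, h2]
  -- the limit function
  set g : ℕ → ℝ := fun i => (U i - U (i + 1)) * G (xlim (m + l - i % l)) with hg
  -- the approximating functions
  set F : ℕ → ℕ → ℝ := fun N i =>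
    if i < N * l + m + 1 then (U i - U (i + 1)) * G (x (N * l + m - i)) else 0 with hF
  -- (a) tsum of F N equals the difference
  have ha : ∀ N, (∑' i, F N i) = x (N * l + m + 1) - x (N * l + m) := by
    intro N
    rw [hdiff' (N * l + m)]
    rw [tsum_eq_sum (s := Finset.range (N * l + m + 1))
      (by intro i hi
          simp only [hF]
          rw [if_neg (by simpa using hi)])]
    refine Finset.sum_congr rfl fun i hi => ?_
    simp only [hF]
    rw [if_pos (Finset.mem_range.mp hi)]
  -- (b) pointwise convergence
  have hb : ∀ i, Tendsto (fun N => F N i) atTop (𝓝 (g i)) := by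
    intro i
    have hj : i % l < l := Nat.mod_lt _ (by omega)
    have hi : l * (i / l) + i % l = i := Nat.div_add_mod i l
    obtain ⟨r, c, hr1, hrl, hxr, hkey⟩ :
        ∃ r c, 1 ≤ r ∧ r ≤ l ∧ xlim r = xlim (m + l - i % l) ∧
          ∀ N, c ≤ N → N * l + m - i = (N - c) * l + r := by
      by_cases hjm : i % l < m
      · refine ⟨m - i % l, i / l, by omega, by omega, ?_, ?_⟩
        · have h := hper (m - i % l)
          have he : m - i % l + l = m + l - i % l := by omega
          rw [he] at h
          exact h.symm
        · intro N hN
          obtain ⟨d, rfl⟩ : ∃ d, N = i / l + d := ⟨N - i / l, by omega⟩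
          have h1 : (i / l + d) * l = l * (i / l) + d * l := by ring
          have h2 : i / l + d - i / l = d := by omega
          rw [h1, h2]
          omega
      · refine ⟨m + l - i % l, i / l + 1, by omega, by omega, rfl, ?_⟩
        intro N hN
        obtain ⟨d, rfl⟩ : ∃ d, N = (i / l + 1) + d := ⟨N - (i / l + 1), by omega⟩
        have h1 : (i / l + 1 + d) * l = l * (i / l) + l + d * l := by ring
        have h2 : i / l + 1 + d - (i / l + 1) = d := by omega
        rw [h1, h2]
        omega
    have ht : Tendsto (fun N : ℕ => x (N * l + m - i)) atTop
        (𝓝 (xlim (m + l - i % l))) := by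
      have h1 : Tendsto (fun N : ℕ => x ((N - c) * l + r)) atTop (𝓝 (xlim r)) :=
        (hlim r hr1 hrl).comp (tendsto_sub_atTop_nat c)
      rw [hxr] at h1
      refine h1.congr' ?_
      filter_upwards [eventually_ge_atTop c] with N hN
      exact congrArg x (hkey N hN).symm
    have ht2 : Tendsto (fun N : ℕ => (U i - U (i + 1)) * G (x (N * l + m - i)))
        atTop (𝓝 (g i)) := by
      simpa only [hg, Function.comp_def] using tendsto_const_nhds.mul ((hG.tendsto _).comp ht)
    refine ht2.congr' ?_
    filter_upwards [eventually_ge_atTop i] with N hN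
    simp only [hF]
    rw [if_pos]
    have h5 : i ≤ N * l := le_trans hN (Nat.le_mul_of_pos_right N (by omega))
    omega
  -- (c) uniform bound
  have hc : ∀ᶠ N in atTop, ∀ i, ‖F N i‖ ≤ |U i - U (i + 1)| * C := by
    refine Eventually.of_forall fun N i => ?_
    simp only [hF]
    split_ifs with h
    · rw [Real.norm_eq_abs, abs_mul]
      exact mul_le_mul_of_nonneg_left (hC _) (abs_nonneg _)
    · simp [mul_nonneg (abs_nonneg _) hC0]
  have hbound : Summable (fun i : ℕ => |U i - U (i + 1)| * C) := hVsum.mul_right C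
  -- dominated convergence
  have hmain : Tendsto (fun N => ∑' i, F N i) atTop (𝓝 (∑' i, g i)) :=
    tendsto_tsum_of_dominated_convergence hbound hb hc
  -- LHS limit
  have hLHS : Tendsto (fun N => x (N * l + m + 1) - x (N * l + m)) atTop
      (𝓝 (xlim (m + 1) - xlim m)) := by
    have h2 : Tendsto (fun N : ℕ => x (N * l + m)) atTop (𝓝 (xlim m)) := hlim m hm1 hml
    have h1 : Tendsto (fun N : ℕ => x (N * l + m + 1)) atTop (𝓝 (xlim (m + 1))) := by
      by_cases hmeq : m < l
      · have := hlim (m + 1) (by omega) (by omega)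
        simpa [← add_assoc] using this
      · have hml' : m = l := by omega
        have h3 : Tendsto (fun N : ℕ => x ((N + 1) * l + 1)) atTop (𝓝 (xlim 1)) :=
          (hlim 1 (by omega) hl).comp (tendsto_add_atTop_nat 1)
        have h4 : xlim (m + 1) = xlim 1 := by
          have h := hper 1
          rw [add_comm] at h
          rw [hml', ← h]
        rw [h4]
        refine h3.congr fun N => ?_
        congr 1
        have h5 : (N + 1) * l = N * l + l := by ring
        rw [h5, hml']
    exact h1.sub h2
  -- conclude equality of limits
  have heq : xlim (m + 1) - xlim m = ∑' i, g i := by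
    refine tendsto_nhds_unique ?_ hmain
    refine hLHS.congr fun N => ?_
    rw [ha N]
  rw [heq]
  -- summability of g
  have hgb : ∀ i, ‖g i‖ ≤ |U i - U (i + 1)| * C := fun i =>
    le_of_tendsto (hb i).norm (hc.mono fun N h => h i)
  have hgsum : Summable g := hbound.of_norm_bounded hgb
  -- decompose the tsum by residues mod l
  have hsum2 : Summable (fun p : ℕ × Fin l => g (p.1 * l + (p.2 : ℕ))) :=
    (Nat.divModEquiv l).symm.summable_iff.mpr hgsum
  have hcol : ∀ j : ℕ, j < l → Summable (fun k : ℕ => g (k * l + j)) := by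
    intro j hjl
    refine hgsum.comp_injective fun a b hab => ?_
    have hab' : a * l + j = b * l + j := hab
    exact Nat.eq_of_mul_eq_mul_right (show 0 < l by omega)
      (by omega : a * l = b * l)
  have hstep1 : ∑' i, g i = ∑' p : ℕ × Fin l, g (p.1 * l + (p.2 : ℕ)) := by
    rw [← (Nat.divModEquiv l).symm.tsum_eq g]
    exact tsum_congr fun p => by simp [Nat.divModEquiv]
  have hstep2 : ∑' p : ℕ × Fin l, g (p.1 * l + (p.2 : ℕ))
      = ∑' k : ℕ, ∑ j : Fin l, g (k * l + (j : ℕ)) := by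
    rw [Summable.tsum_prod' hsum2 fun k => Summable.of_finite]
    exact tsum_congr fun k => tsum_fintype _
  have hstep3 : ∑' k : ℕ, ∑ j : Fin l, g (k * l + (j : ℕ))
      = ∑ j : Fin l, ∑' k : ℕ, g (k * l + (j : ℕ)) := by
    refine Summable.tsum_finsetSum fun j _ => hcol j j.isLt
  rw [hstep1, hstep2, hstep3, Fin.sum_univ_eq_sum_range
    (fun j => ∑' k : ℕ, g (k * l + j)) l]
  refine Finset.sum_congr rfl fun j hj => ?_
  have hjl : j < l := Finset.mem_range.mp hj
  have hmod : ∀ k : ℕ, (k * l + j) % l = j := fun k => by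
    have h : k * l + j = j + k * l := by ring
    rw [h, Nat.add_mul_mod_self_right, Nat.mod_eq_of_lt hjl]
  have hterm : ∀ k : ℕ, g (k * l + j)
      = (U (l * k + j) - U (l * k + j + 1)) * G (xlim (m + l - j)) := by
    intro k
    simp only [hg]
    rw [hmod k, mul_comm k l]
  rw [tsum_congr hterm, tsum_mul_right]
end

section
/- Let h > 0, let U : ℕ → ℝ satisfy U(0) = 0 and ΔU ∈ D⁰(ℕ₁), i.e. the series ∑_{k=1}^∞ (U(k+1) − U(k)) diverges while ∑_{k=1}^∞ |U(k+2) − 2U(k+1) + U(k)| converges. Let G : ℝ → ℝ be continuous, let f : ℕ → ℝ satisfy f(n+1) − f(n) → 0 as n → ∞, let p₀, x₀ ∈ ℝ, and let x : ℕ → ℝ satisfy x_{n+1} = x₀ + h(n+1)p₀ − h·∑_{k=0}^{n} G(x_k)·U(n−k+1) + h·f(n) for all n ≥ 0. Suppose for some integer l ≥ 2 the sequence x has asymptotically period-l points x_{lim,1}, …, x_{lim,l}, indexed cyclically modulo l. Define the first-difference kernel U¹ : ℕ → ℝ by U¹(0) = 0 and U¹(n) = U(n) − U(n−1) for n ≥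 1, and set S¹_{j+1} = ∑_{k=0}^∞ (U¹(lk+j) − U¹(lk+j+1)) for 0 ≤ j < l. Then for every index m (cyclically modulo l), x_{lim,m+1} − 2·x_{lim,m} + x_{lim,m−1} = h·∑_{j=0}^{l−1} S¹_{j+1}·G(x_{lim,m−j}). -/
/-!
Taking second differences of the memory map kills the linear term and turns the kernel `U` into
`U¹(i) - U¹(i+1)`, which is absolutely summable since `ΔU ∈ D⁰`. Along `n = N l + m + l`, the
convolution `∑ G(x_{n-i}) (U¹(i) - U¹(i+1))` converges by dominated convergence (`G ∘ x` is bounded,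
as it converges along every residue class mod `l`) to `∑ G(x_{lim, m+l-(i mod l)}) (U¹(i) - U¹(i+1))`;
grouping the terms by the residue of `i` yields the `S¹_{j+1}`. The second difference
of `f` tends to `0`.
-/

open Filter Finset Topology

theorem tsum_eq_sum_range_tsum_mul_add {R : Type*} [AddCommGroup R] [UniformSpace R]
    [IsUniformAddGroup R] [CompleteSpace R] [T0Space R] {w : ℕ → R} (hw : Summable w)
    {l : ℕ} (hl : 0 < l) :
    ∑' i, w i = ∑ j ∈ range l, ∑' k, w (l * k + j) := by
  obtain ⟨l, rfl⟩ := Nat.exists_eq_add_one_of_ne_zero hl.ne'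
  rw [Nat.sumByResidueClasses hw (l + 1), ← Fin.sum_univ_eq_sum_range]
  exact sum_congr rfl fun j _ => tsum_congr fun k => congrArg w (add_comm _ _)

theorem exists_abs_le_of_tendsto_mul_add {g c : ℕ → ℝ} {l : ℕ} (hl : 0 < l)
    (hg : ∀ s, Tendsto (fun N => g (N * l + s)) atTop (𝓝 (c s))) : ∃ C, ∀ n, |g n| ≤ C := by
  have hsub : Set.range g ⊆ ⋃ s : Fin l, Set.range fun N => g (N * l + s) := by
    rintro _ ⟨n, rfl⟩
    exact Set.mem_iUnion.2 ⟨⟨n % l, Nat.mod_lt n hl⟩, n / l, by simp only [Nat.div_add_mod']⟩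
  obtain ⟨C, hC⟩ := isBounded_iff_forall_norm_le.1 <|
    (Bornology.isBounded_iUnion.2 fun s : Fin l =>
      Metric.isBounded_range_of_tendsto _ (hg s)).subset hsub
  exact ⟨C, fun n => hC _ ⟨n, rfl⟩⟩

theorem tendsto_mul_add_of_periodic {X : Type*} [TopologicalSpace X] {x c : ℕ → X} {l : ℕ}
    (hl : 0 < l) (hc : Function.Periodic c l)
    (hx : ∀ m, 1 ≤ m → m ≤ l → Tendsto (fun N => x (N * l + m)) atTop (𝓝 (c m))) (s : ℕ) :
    Tendsto (fun N => x (N * l + s)) atTop (𝓝 (c s)) := by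
  have shift : ∀ s a, Tendsto (fun N => x (N * l + (s + l))) atTop (𝓝 a) ↔
      Tendsto (fun N => x (N * l + s)) atTop (𝓝 a) := fun s a => by
    have hshift : (fun N => x (N * l + (s + l))) = fun N => x ((N + 1) * l + s) :=
      funext fun N => congrArg x (by ring)
    rw [hshift]
    exact tendsto_add_atTop_iff_nat (f := fun N => x (N * l + s)) 1
  induction s using Nat.strong_induction_on with
  | _ s ih =>
    rcases Nat.eq_zero_or_pos s with rfl | hs
    · rw [← shift, ← hc 0]
      exact hx (0 + l) (by omega) (by omega)
    by_cases hsl : s ≤ l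
    · exact hx s hs hsl
    · obtain ⟨t, rfl⟩ : ∃ t, s = t + l := ⟨s - l, by omega⟩
      rw [shift, hc t]
      exact ih t (by omega)

theorem sum_range_mul_sub_eq_tsum_ite {R : Type*} [Semiring R] [TopologicalSpace R]
    (g d : ℕ → R) (n : ℕ) :
    ∑ k ∈ range (n + 1), g k * d (n - k) = ∑' i, if i ≤ n then g (n - i) * d i else 0 := by
  rw [tsum_eq_sum (s := range (n + 1)) fun i hi => if_neg (by simpa using hi),
    ← sum_range_reflect]
  refine sum_congr rfl fun i hi => ?_
  have hin := mem_range.1 hi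
  rw [if_pos (by omega), show n + 1 - 1 - i = n - i by omega, show n - (n - i) = i by omega]

theorem tendsto_sum_range_mul_of_tendsto_mul_add {g d c : ℕ → ℝ} {l r : ℕ} (hl : 0 < l)
    (hr : l ≤ r) (hg : ∀ s, Tendsto (fun N => g (N * l + s)) atTop (𝓝 (c s)))
    (hd : Summable fun i => |d i|) :
    Tendsto (fun N => ∑ k ∈ range (N * l + r + 1), g k * d (N * l + r - k)) atTop
      (𝓝 (∑ j ∈ range l, (∑' k, d (l * k + j)) * c (r - j))) := by
  obtain ⟨C, hC⟩ := exists_abs_le_of_tendsto_mul_add hl hg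
  have hcC : ∀ s, |c s| ≤ C := fun s =>
    le_of_tendsto (hg s).abs (Eventually.of_forall fun N => hC _)
  set F : ℕ → ℕ → ℝ := fun n i => if i ≤ n then g (n - i) * d i else 0
  have hF_lim : ∀ i, Tendsto (fun N => F (N * l + r) i) atTop (𝓝 (c (r - i % l) * d i)) := by
    intro i
    have hi := Nat.div_add_mod' i l
    have hil := Nat.mod_lt i hl
    refine (((hg _).comp (tendsto_sub_atTop_nat (i / l))).mul_const (d i)).congr' ?_
    filter_upwards [eventually_ge_atTop (i / l)] with N hN
    obtain ⟨a, rfl⟩ := Nat.exists_eq_add_of_le hN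
    have hidx : (i / l + a) * l + r - i = a * l + (r - i % l) := by rw [add_mul]; omega
    simp only [Function.comp, F, Nat.add_sub_cancel_left, hidx,
      if_pos (show i ≤ (i / l + a) * l + r by rw [add_mul]; omega)]
  have hF_le : ∀ n i, ‖F n i‖ ≤ C * |d i| := by
    intro n i
    have hC0 : 0 ≤ C := (abs_nonneg _).trans (hC 0)
    simp only [F, Real.norm_eq_abs]
    split_ifs
    · rw [abs_mul]; exact mul_le_mul_of_nonneg_right (hC _) (abs_nonneg _)
    · simpa using mul_nonneg hC0 (abs_nonneg _)
  have hsum : Summable fun i => c (r - i % l) * d i :=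
    Summable.of_norm_bounded (hd.mul_left C) fun i => by
      rw [Real.norm_eq_abs, abs_mul]; exact mul_le_mul_of_nonneg_right (hcC _) (abs_nonneg _)
  have hregroup : ∑' i, c (r - i % l) * d i = ∑ j ∈ range l, (∑' k, d (l * k + j)) * c (r - j) := by
    rw [tsum_eq_sum_range_tsum_mul_add hsum hl]
    refine sum_congr rfl fun j hj => ?_
    simp only [Nat.mul_add_mod, Nat.mod_eq_of_lt (mem_range.1 hj)]
    rw [tsum_mul_left, mul_comm]
  rw [← hregroup]
  simpa only [sum_range_mul_sub_eq_tsum_ite] using tendsto_tsum_of_dominated_convergence (hd.mul_left C) hF_lim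
    (Eventually.of_forall fun N => hF_le _)

theorem sum_range_mul_sub_add_one_eq {R : Type*} [Semiring R] {g U : ℕ → R} (hU0 : U 0 = 0)
    {n M : ℕ} (hM : n + 1 ≤ M) :
    ∑ k ∈ range (n + 1), g k * U (n - k + 1) = ∑ k ∈ range M, g k * U (n + 1 - k) := by
  refine sum_subset_zero_on_sdiff (range_subset_range.2 hM) (fun k hk => ?_) (fun k hk => ?_)
  · -- truncated subtraction: `n + 1 - k = 0` for `k > n`
    have : n + 1 - k = 0 := by simp at hk; omega
    rw [this, hU0, mul_zero]
  · rw [Nat.sub_add_comm (Nat.lt_succ_iff.1 (mem_range.1 hk))]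

theorem memory_map_second_diff {x g f U U1 : ℕ → ℝ} {h p₀ x₀ : ℝ} (hU0 : U 0 = 0)
    (hU1 : ∀ n, U1 n = U n - U (n - 1))
    (hmap : ∀ n : ℕ, x (n + 1) =
      x₀ + h * (n + 1) * p₀ - h * ∑ k ∈ range (n + 1), g k * U (n - k + 1) + h * f n)
    (n : ℕ) :
    x (n + 3) - 2 * x (n + 2) + x (n + 1) =
      h * ∑ k ∈ range (n + 3), g k * (U1 (n + 2 - k) - U1 (n + 2 - k + 1))
        + h * (f (n + 2) - 2 * f (n + 1) + f n) := by
  have hkernel : ∑ k ∈ range (n + 3), g k * (U1 (n + 2 - k) - U1 (n + 2 - k + 1)) =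
      2 * ∑ k ∈ range (n + 3), g k * U (n + 1 + 1 - k)
        - ∑ k ∈ range (n + 3), g k * U (n + 2 + 1 - k)
        - ∑ k ∈ range (n + 3), g k * U (n + 1 - k) := by
    simp only [mul_sum, ← sum_sub_distrib]
    refine sum_congr rfl fun k hk => ?_
    have hk' := mem_range.1 hk
    rw [hU1, hU1, show n + 2 - k - 1 = n + 1 - k by omega,
      show n + 2 - k + 1 - 1 = n + 2 - k by omega, show n + 2 + 1 - k = n + 2 - k + 1 by omega]
    ring
  rw [hmap (n + 2), hmap (n + 1), hmap n, sum_range_mul_sub_add_one_eq hU0 (M := n + 3) le_rfl,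
    sum_range_mul_sub_add_one_eq hU0 (M := n + 3) (by omega),
    sum_range_mul_sub_add_one_eq hU0 (M := n + 3) (by omega), hkernel]
  push_cast
  ring

theorem stmt_3_general (h : ℝ) (U : ℕ → ℝ) (hU0 : U 0 = 0)
    (hconv : Summable (fun k : ℕ => |U (k + 1 + 2) - 2 * U (k + 1 + 1) + U (k + 1)|))
    (G : ℝ → ℝ) (hG : Continuous G)
    (f : ℕ → ℝ) (hf : Tendsto (fun n : ℕ => f (n + 1) - f n) atTop (𝓝 0))
    (p₀ x₀ : ℝ) (x : ℕ → ℝ)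
    (hmap : ∀ n : ℕ, x (n + 1) =
      x₀ + h * (n + 1) * p₀
        - h * ∑ k ∈ Finset.range (n + 1), G (x k) * U (n - k + 1) + h * f n)
    (l : ℕ) (hl : 2 ≤ l) (xlim : ℕ → ℝ)
    (hper : ∀ m : ℕ, xlim (m + l) = xlim m)
    (hlim : ∀ m : ℕ, 1 ≤ m → m ≤ l →
      Tendsto (fun N : ℕ => x (N * l + m)) atTop (𝓝 (xlim m)))
    (U1 : ℕ → ℝ) (hU1 : ∀ n : ℕ, U1 n = U n - U (n - 1)) :
    ∀ m : ℕ, 1 ≤ m → m ≤ l →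
      xlim (m + 1) - 2 * xlim m + xlim (m + l - 1) =
        h * ∑ j ∈ Finset.range l,
          (∑' k : ℕ, (U1 (l * k + j) - U1 (l * k + j + 1))) * G (xlim (m + l - j)) := by
  intro m hm hml
  have hl0 : 0 < l := by omega
  have hx := tendsto_mul_add_of_periodic hl0 hper hlim
  have hkernel_summable : Summable fun i => |U1 i - U1 (i + 1)| := by
    refine (summable_nat_add_iff 2).1 (hconv.congr fun k => ?_)
    rw [hU1, hU1, show k + 2 - 1 = k + 1 by omega, show k + 2 + 1 - 1 = k + 2 by omega, ← abs_neg]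
    ring_nf
  obtain ⟨r, hr⟩ : ∃ r, m + l = r + 2 := ⟨m + l - 2, by omega⟩
  have hidx : Tendsto (fun N => N * l + r) atTop atTop :=
    tendsto_atTop_mono (fun N => le_add_right (Nat.le_mul_of_pos_right N hl0)) tendsto_id
  have hmemory := tendsto_sum_range_mul_of_tendsto_mul_add (g := fun n => G (x n))
    (c := fun s => G (xlim s)) hl0 (r := r + 2) (by omega)
    (fun s => (hG.tendsto _).comp (hx s)) hkernel_summable
  have hforcing : Tendsto (fun N => f (N * l + r + 2) - 2 * f (N * l + r + 1) + f (N * l + r))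
      atTop (𝓝 0) := by
    have hΔ := (hf.comp (tendsto_add_atTop_nat 1)).sub hf
    rw [sub_zero] at hΔ
    exact (hΔ.comp hidx).congr fun N => by simp only [Function.comp_apply]; ring_nf
  rw [← hper (m + 1), ← hper m, show m + 1 + l = r + 3 by omega, hr,
    show r + 2 - 1 = r + 1 by omega]
  refine tendsto_nhds_unique (((hx (r + 3)).sub ((hx (r + 2)).const_mul 2)).add (hx (r + 1))) ?_
  have hrhs := ((hmemory.const_mul h).add (hforcing.const_mul h)).congr fun N =>
    (memory_map_second_diff hU0 hU1 hmap (N * l + r)).symm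
  rwa [mul_zero, add_zero] at hrhs

/-- For a memory map of order `1 < α < 2` type (kernel `U` with
`ΔU ∈ D⁰(ℕ₁)`), the second differences of the asymptotically period-`l`
points are expressed through the coefficients `S¹_{j+1}` built from the first
difference kernel `U¹(n) = U(n) − U(n−1)`. Cyclic indexing is expressed by
periodicity of `xlim`. -/
theorem stmt_3 (h : ℝ) (hh : 0 < h) (U : ℕ → ℝ) (hU0 : U 0 = 0)
    (hdiv : ¬ Summable (fun k : ℕ => U (k + 1 + 1) - U (k + 1)))
    (hconv : Summable (fun k : ℕ => |U (k + 1 + 2) - 2 * U (k + 1 + 1) + U (k + 1)|))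
    (G : ℝ → ℝ) (hG : Continuous G)
    (f : ℕ → ℝ) (hf : Tendsto (fun n : ℕ => f (n + 1) - f n) atTop (𝓝 0))
    (p₀ x₀ : ℝ) (x : ℕ → ℝ)
    (hmap : ∀ n : ℕ, x (n + 1) =
      x₀ + h * (n + 1) * p₀
        - h * ∑ k ∈ Finset.range (n + 1), G (x k) * U (n - k + 1) + h * f n)
    (l : ℕ) (hl : 2 ≤ l) (xlim : ℕ → ℝ)
    (hper : ∀ m : ℕ, xlim (m + l) = xlim m)
    (hlim : ∀ m : ℕ, 1 ≤ m → m ≤ l →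
      Tendsto (fun N : ℕ => x (N * l + m)) atTop (𝓝 (xlim m)))
    (U1 : ℕ → ℝ) (hU1 : ∀ n : ℕ, U1 n = U n - U (n - 1)) :
    ∀ m : ℕ, 1 ≤ m → m ≤ l →
      xlim (m + 1) - 2 * xlim m + xlim (m + l - 1) =
        h * ∑ j ∈ Finset.range l,
          (∑' k : ℕ, (U1 (l * k + j) - U1 (l * k + j + 1))) * G (xlim (m + l - j)) :=
  stmt_3_general h U hU0 hconv G hG f hf p₀ x₀ x hmap l hl xlim hper hlim U1 hU1
end

section
/- Let 1 < α < 2, h > 0, let G : ℝ → ℝ be continuous, let p₀, x₀ ∈ ℝ, and let x, p : ℕ → ℝ satisfy the fractional universal map equations x_{n+1} = x₀ + h(n+1)p₀ − (h^α/Γ(α))·∑_{k=0}^{n} G(x_k)·(n−k+1)^{α−1} and p_{n+1} = p₀ − (h^{α−1}/Γ(α−1))·∑_{k=0}^{n} G(x_k)·(n−k+1)^{α−2} for all n ≥ 0. Suppose for some integer l ≥ 2 there exist limits x_{lim,m} = lim_{N→∞} x_{Nl+m} and p_{lim,m} = lim_{N→∞} p_{Nl+m} for every m with 1 ≤ m ≤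 l. Then the total of all physical momenta of the period-l points is zero: ∑_{j=1}^{l} p_{lim,j} = 0. -/
open Filter Finset Topology


lemma st4_int_eq {α : ℝ} (hα1 : 1 < α) (a b : ℝ) :
    b ^ (α-1) - a ^ (α-1) = (α-1) * ∫ t in a..b, t ^ (α-2) := by
  rw [integral_rpow (Or.inl (by linarith : (-1:ℝ) < α - 2))]
  have h2 : α - 2 + 1 = α - 1 := by ring
  rw [h2, mul_div_cancel₀ _ (by linarith : α - 1 ≠ 0)]

lemma st4_diff_le {α : ℝ} (hα1 : 1 < α) (hα2 : α < 2) {a b : ℝ} (ha : 1 ≤ a) (hab : a ≤ b) :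
    b ^ (α-1) - a ^ (α-1) ≤ (α-1) * ((b - a) * a ^ (α-2)) := by
  rw [st4_int_eq hα1]
  refine mul_le_mul_of_nonneg_left ?_ (by linarith)
  calc ∫ t in a..b, t ^ (α-2) ≤ ∫ _t in a..b, a ^ (α-2) := by
        apply intervalIntegral.integral_mono_on hab
          (intervalIntegral.intervalIntegrable_rpow' (by linarith)) intervalIntegrable_const
        intro t ht
        exact Real.rpow_le_rpow_of_nonpos (by linarith [ht.1]) ht.1 (by linarith)
    _ = (b - a) * a ^ (α-2) := by rw [intervalIntegral.integral_const]; simp [smul_eq_mul]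

lemma st4_diff_ge {α : ℝ} (hα1 : 1 < α) (hα2 : α < 2) {a b : ℝ} (ha : 1 ≤ a) (hab : a ≤ b) :
    (α-1) * ((b - a) * b ^ (α-2)) ≤ b ^ (α-1) - a ^ (α-1) := by
  rw [st4_int_eq hα1]
  refine mul_le_mul_of_nonneg_left ?_ (by linarith)
  calc (b - a) * b ^ (α-2) = ∫ _t in a..b, b ^ (α-2) := by
        rw [intervalIntegral.integral_const]; simp [smul_eq_mul]
    _ ≤ ∫ t in a..b, t ^ (α-2) := by
        apply intervalIntegral.integral_mono_on hab intervalIntegrable_const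
          (intervalIntegral.intervalIntegrable_rpow' (by linarith))
        intro t ht
        exact Real.rpow_le_rpow_of_nonpos (by linarith [ht.1]) ht.2 (by linarith)

lemma st4_pow_alpha_diff {α : ℝ} (hα1 : 1 < α) {a b : ℝ} (ha : 0 ≤ a) (hab : a ≤ b) :
    b ^ α - a ^ α ≤ α * ((b - a) * b ^ (α-1)) := by
  have h0 : b ^ α - a ^ α = α * ∫ t in a..b, t ^ (α-1) := by
    rw [integral_rpow (Or.inl (by linarith : (-1:ℝ) < α - 1))]
    have h2 : α - 1 + 1 = α := by ring
    rw [h2, mul_div_cancel₀ _ (by linarith : α ≠ 0)]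
  rw [h0]
  refine mul_le_mul_of_nonneg_left ?_ (by linarith)
  calc ∫ t in a..b, t ^ (α-1) ≤ ∫ _t in a..b, b ^ (α-1) := by
        apply intervalIntegral.integral_mono_on hab
          (intervalIntegral.intervalIntegrable_rpow' (by linarith)) intervalIntegrable_const
        intro t ht
        exact Real.rpow_le_rpow (le_trans ha ht.1) ht.2 (by linarith)
    _ = (b - a) * b ^ (α-1) := by rw [intervalIntegral.integral_const]; simp [smul_eq_mul]


lemma st4_bdd_of_res (y : ℕ → ℝ) (l : ℕ) (hl : 1 ≤ l)
    (hy : ∀ m, 1 ≤ m → m ≤ l → ∃ c, Tendsto (fun N : ℕ => y (N * l + m)) atTop (𝓝 c)) :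
    ∃ C : ℝ, ∀ n, |y n| ≤ C := by
  have key : ∀ m : ℕ, ∃ C, 1 ≤ m → m ≤ l → ∀ N, |y (N * l + m)| ≤ C := by
    intro m
    by_cases hm : 1 ≤ m ∧ m ≤ l
    · obtain ⟨c, hc⟩ := hy m hm.1 hm.2
      obtain ⟨C, hC⟩ := hc.abs.bddAbove_range
      exact ⟨C, fun _ _ N => hC (Set.mem_range_self N)⟩
    · exact ⟨0, fun h1 h2 => absurd ⟨h1, h2⟩ hm⟩
  choose C hC using key
  have hne : (Finset.Icc 1 l).Nonempty := ⟨1, by simp [hl]⟩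
  refine ⟨max |y 0| ((Finset.Icc 1 l).sup' hne C), fun n => ?_⟩
  cases n with
  | zero => exact le_max_left _ _
  | succ k =>
    have hmlt : k % l < l := Nat.mod_lt _ (by omega)
    have heq : (k / l) * l + (k % l + 1) = k + 1 := by
      have h0 := Nat.div_add_mod k l
      have h1 : k / l * l = l * (k / l) := Nat.mul_comm _ _
      omega
    calc |y (k+1)| = |y ((k / l) * l + (k % l + 1))| := by rw [heq]
      _ ≤ C (k % l + 1) := hC _ (by omega) (by omega) _
      _ ≤ (Finset.Icc 1 l).sup' hne C := Finset.le_sup' C (by simp; omega)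
      _ ≤ _ := le_max_right _ _

lemma st4_sum_range_mul (y : ℕ → ℝ) (l : ℕ) :
    ∀ N, ∑ n ∈ range (N * l), y n = ∑ r ∈ range l, ∑ J ∈ range N, y (J * l + r)
  | 0 => by simp
  | (N+1) => by
    have h1 : (N+1) * l = N * l + l := by ring
    rw [h1, Finset.sum_range_add, st4_sum_range_mul y l N, ← Finset.sum_add_distrib]
    exact Finset.sum_congr rfl fun r _ => (Finset.sum_range_succ _ _).symm

lemma st4_cesaro_res (y : ℕ → ℝ) (l : ℕ) (c : ℕ → ℝ)
    (hy : ∀ r, r < l → Tendsto (fun J : ℕ => y (J * l + r)) atTop (𝓝 (c r))) :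
    Tendsto (fun N : ℕ => (∑ n ∈ range (N * l), y n) / (N : ℝ)) atTop
      (𝓝 (∑ r ∈ range l, c r)) := by
  have hcong : ∀ N : ℕ, (∑ n ∈ range (N * l), y n) / (N : ℝ)
      = ∑ r ∈ range l, ((N : ℝ)⁻¹ * ∑ J ∈ range N, y (J * l + r)) := by
    intro N
    rw [st4_sum_range_mul, Finset.sum_div]
    exact Finset.sum_congr rfl fun r _ => by rw [div_eq_inv_mul]
  rw [show (fun N : ℕ => (∑ n ∈ range (N * l), y n) / (N : ℝ))
      = fun N : ℕ => ∑ r ∈ range l, ((N : ℝ)⁻¹ * ∑ J ∈ range N, y (J * l + r)) from funext hcong]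
  exact tendsto_finset_sum _ fun r hr => (hy r (mem_range.mp hr)).cesaro


lemma st4_abel (β : ℝ) (a : ℕ → ℝ) (n : ℕ) :
    ∑ k ∈ range (n+1), a k * (((n - k : ℕ) : ℝ) + 1) ^ β
      = (∑ j ∈ range (n+1), a j)
        + ∑ i ∈ range n, ((((n - i : ℕ) : ℝ) + 1) ^ β - ((n - i : ℕ) : ℝ) ^ β)
            * ∑ j ∈ range (i+1), a j := by
  have key := Finset.sum_range_by_parts (fun i => (((n - i : ℕ) : ℝ) + 1) ^ β) a (n+1)
  simp only [smul_eq_mul, Nat.add_sub_cancel, Nat.sub_self, Nat.cast_zero, zero_add,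
    Real.one_rpow, one_mul] at key
  have h1 : ∑ k ∈ range (n+1), a k * (((n - k : ℕ) : ℝ) + 1) ^ β
      = ∑ i ∈ range (n+1), (((n - i : ℕ) : ℝ) + 1) ^ β * a i :=
    Finset.sum_congr rfl fun k _ => mul_comm _ _
  have h3 : ∑ i ∈ range n, ((((n - (i+1) : ℕ) : ℝ) + 1) ^ β - (((n - i : ℕ) : ℝ) + 1) ^ β)
        * ∑ j ∈ range (i+1), a j
      = - ∑ i ∈ range n, ((((n - i : ℕ) : ℝ) + 1) ^ β - ((n - i : ℕ) : ℝ) ^ β)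
        * ∑ j ∈ range (i+1), a j := by
    rw [← Finset.sum_neg_distrib]
    refine Finset.sum_congr rfl fun i hi => ?_
    have hi' : i < n := mem_range.mp hi
    have hc : ((n - (i+1) : ℕ) : ℝ) + 1 = ((n - i : ℕ) : ℝ) := by
      have : (n - (i+1)) + 1 = n - i := by omega
      exact_mod_cast congrArg (Nat.cast : ℕ → ℝ) this
    rw [hc]; ring
  rw [h1, key, h3]; ring

lemma st4_W_lb {α : ℝ} (hα1 : 1 < α) (n : ℕ) :
    ((n : ℝ)+1) ^ α / α ≤ ∑ k ∈ range (n+1), (((n - k : ℕ) : ℝ) + 1) ^ (α-1) := by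
  have hrefl : ∑ k ∈ range (n+1), (((n - k : ℕ) : ℝ) + 1) ^ (α-1)
      = ∑ k ∈ range (n+1), (((k : ℕ) : ℝ) + 1) ^ (α-1) := by
    rw [← Finset.sum_range_reflect (fun k => (((k : ℕ) : ℝ) + 1) ^ (α-1)) (n+1)]
    exact Finset.sum_congr rfl fun k hk => by norm_num
  rw [hrefl]
  have htel : ∑ k ∈ range (n+1),
      (((k:ℝ) + 1) ^ α / α - ((k : ℕ) : ℝ) ^ α / α) = ((n:ℝ) + 1) ^ α / α := by
    have := Finset.sum_range_sub (fun k => ((k : ℕ) : ℝ) ^ α / α) (n+1)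
    push_cast at this
    rw [this]
    simp [Real.zero_rpow (by linarith : α ≠ 0)]
  rw [← htel]
  refine Finset.sum_le_sum fun k _ => ?_
  have hαpos : (0:ℝ) < α := by linarith
  rw [div_sub_div_same, div_le_iff₀ hαpos]
  have := st4_pow_alpha_diff hα1 (Nat.cast_nonneg k) (by linarith : (k:ℝ) ≤ (k:ℝ) + 1)
  calc ((k:ℝ)+1) ^ α - (k:ℝ) ^ α ≤ α * (((k:ℝ)+1 - k) * ((k:ℝ)+1) ^ (α-1)) := this
    _ = ((k:ℝ)+1) ^ (α-1) * α := by ring_nf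

lemma st4_W_ub {α : ℝ} (hα1 : 1 < α) (n : ℕ) :
    ∑ k ∈ range (n+1), (((n - k : ℕ) : ℝ) + 1) ^ (α-1) ≤ ((n : ℝ)+1) ^ α := by
  have h1 : ∀ k ∈ range (n+1), (((n - k : ℕ) : ℝ) + 1) ^ (α-1) ≤ ((n : ℝ)+1) ^ (α-1) := by
    intro k hk
    apply Real.rpow_le_rpow (by positivity) _ (by linarith)
    have : ((n - k : ℕ) : ℝ) ≤ (n : ℝ) := by exact_mod_cast Nat.sub_le n k
    linarith
  calc ∑ k ∈ range (n+1), (((n - k : ℕ) : ℝ) + 1) ^ (α-1)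
      ≤ ∑ _k ∈ range (n+1), ((n : ℝ)+1) ^ (α-1) := Finset.sum_le_sum h1
    _ = ((n:ℝ)+1) * ((n : ℝ)+1) ^ (α-1) := by
        rw [Finset.sum_const, Finset.card_range, nsmul_eq_mul]; push_cast; ring
    _ = ((n : ℝ)+1) ^ α := by
        rw [← Real.rpow_one_add' (by linarith) (by linarith)]; ring_nf


set_option maxHeartbeats 1000000 in
lemma st4_gamma_zero (α : ℝ) (hα1 : 1 < α) (hα2 : α < 2)
    (a : ℕ → ℝ) (Ma : ℝ) (hMa : ∀ k, |a k| ≤ Ma)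
    (γ : ℝ) (hA : Tendsto (fun N : ℕ => (∑ k ∈ range N, a k) / (N : ℝ)) atTop (𝓝 γ))
    (Cs : ℝ)
    (hS : ∀ n : ℕ, |∑ k ∈ range (n+1), a k * (((n - k : ℕ) : ℝ) + 1) ^ (α-1)| ≤ Cs * ((n:ℝ)+1)) :
    γ = 0 := by
  have hMa0 : 0 ≤ Ma := le_trans (abs_nonneg _) (hMa 0)
  have hαpos : (0:ℝ) < α := by linarith
  have hCs0 : 0 ≤ Cs := by
    have := le_trans (abs_nonneg _) (hS 0); nlinarith
  set A : ℕ → ℝ := fun N => ∑ k ∈ range N, a k with hAdef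
  have hAsmall : ∀ k : ℕ, |A k - γ * k| ≤ (Ma + |γ|) * k := by
    intro k
    have h1 : |A k| ≤ Ma * k := by
      calc |A k| ≤ ∑ i ∈ range k, |a i| := Finset.abs_sum_le_sum_abs _ _
        _ ≤ ∑ _i ∈ range k, Ma := Finset.sum_le_sum fun i _ => hMa i
        _ = Ma * k := by rw [Finset.sum_const, Finset.card_range, nsmul_eq_mul]; ring
    have h2 : |γ * k| = |γ| * k := by
      rw [abs_mul, Nat.abs_cast]
    calc |A k - γ * k| ≤ |A k| + |γ * k| := abs_sub _ _
      _ ≤ Ma * k + |γ| * k := by rw [h2]; linarith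
      _ = (Ma + |γ|) * k := by ring
  have key : ∀ ε : ℝ, 0 < ε → |γ| / α ≤ ε := by
    intro ε hε
    obtain ⟨K₀, hK₀⟩ := Metric.tendsto_atTop.mp hA ε hε
    set K : ℕ := K₀ + 1 with hKdef
    set C₀ : ℝ := (Ma + |γ|) * K with hC₀def
    have hC₀0 : 0 ≤ C₀ := by positivity
    have hAbound : ∀ k : ℕ, K ≤ k → |A k - γ * k| ≤ ε * k := by
      intro k hk
      have hkpos : (0:ℝ) < (k:ℝ) := by exact_mod_cast Nat.pos_of_ne_zero (by omega)
      have hd := hK₀ k (by omega)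
      rw [Real.dist_eq] at hd
      have heq : A k - γ * k = (A k / k - γ) * k := by
        rw [sub_mul, div_mul_cancel₀ _ (ne_of_gt hkpos), mul_comm γ]
      rw [heq, abs_mul, abs_of_nonneg hkpos.le]
      exact mul_le_mul_of_nonneg_right hd.le hkpos.le
    have hcomb : ∀ k : ℕ, |A k - γ * k| ≤ ε * k + (if k < K then C₀ else 0) := by
      intro k
      by_cases hk : k < K
      · rw [if_pos hk]
        have hkK : (k:ℝ) ≤ (K:ℝ) := by exact_mod_cast hk.le
        have hC : (Ma + |γ|) * k ≤ C₀ := by nlinarith [abs_nonneg γ]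
        have hεk : 0 ≤ ε * k := by positivity
        linarith [hAsmall k]
      · rw [if_neg hk]
        simpa using hAbound k (by omega)
    have hmain : ∀ n : ℕ, K + 1 ≤ n →
        |γ| / α ≤ ε + (Cs + C₀ * (α-1)) * ((n:ℝ)+1) ^ (1-α) := by
      intro n hn
      have hnK1 : (K:ℝ) + 1 ≤ (n:ℝ) := by exact_mod_cast hn
      set W : ℝ := ∑ k ∈ range (n+1), (((n - k : ℕ) : ℝ) + 1) ^ (α-1) with hWdef
      set Sn : ℝ := ∑ k ∈ range (n+1), a k * (((n - k : ℕ) : ℝ) + 1) ^ (α-1) with hSndef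
      set D : ℕ → ℝ := fun i => ((((n - i : ℕ)) : ℝ) + 1) ^ (α-1) - ((n - i : ℕ) : ℝ) ^ (α-1)
        with hDdef
      have hD0 : ∀ i, i < n → 0 ≤ D i := by
        intro i hi
        have h5 : ((n - i : ℕ) : ℝ) ≤ ((n - i : ℕ) : ℝ) + 1 := by linarith
        simpa [hDdef] using sub_nonneg.mpr
          (Real.rpow_le_rpow (Nat.cast_nonneg _) h5 (by linarith : (0:ℝ) ≤ α - 1))
      have hSid : Sn = A (n+1) + ∑ i ∈ range n, D i * A (i+1) := st4_abel (α-1) a n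
      have hWid : W = ((n:ℝ)+1) + ∑ i ∈ range n, D i * ((i:ℝ)+1) := by
        have h0 := st4_abel (α-1) (fun _ => (1:ℝ)) n
        simp only [one_mul, Finset.sum_const, Finset.card_range, nsmul_eq_mul, mul_one,
          Nat.cast_add, Nat.cast_one] at h0
        exact h0
      have hdiff : Sn - γ * W
          = (A (n+1) - γ * ((n:ℝ)+1)) + ∑ i ∈ range n, D i * (A (i+1) - γ * ((i:ℝ)+1)) := by
        rw [hSid, hWid]
        have h6 : ∑ i ∈ range n, D i * (A (i+1) - γ * ((i:ℝ)+1))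
            = (∑ i ∈ range n, D i * A (i+1)) - γ * ∑ i ∈ range n, D i * ((i:ℝ)+1) := by
          rw [Finset.mul_sum, ← Finset.sum_sub_distrib]
          exact Finset.sum_congr rfl fun i _ => by ring
        rw [h6]; ring
      have hterm : ∀ i ∈ range n, D i * |A (i+1) - γ * ((i:ℝ)+1)|
          ≤ D i * (ε * ((i:ℝ)+1)) + C₀ * ((α-1) * ((n:ℝ) - K) ^ (α-2)) := by
        intro i hi
        have hi' : i < n := mem_range.mp hi
        have hc : ((i+1 : ℕ) : ℝ) = (i:ℝ)+1 := by push_cast; ring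
        have h1 : |A (i+1) - γ * ((i:ℝ)+1)| ≤ ε * ((i:ℝ)+1) + (if i+1 < K then C₀ else 0) := by
          have h7 := hcomb (i+1); rw [hc] at h7; exact h7
        by_cases hiK : i + 1 < K
        · rw [if_pos hiK] at h1
          have hDle : D i ≤ (α-1) * ((n:ℝ) - K) ^ (α-2) := by
            have hni1 : (1:ℝ) ≤ ((n - i : ℕ) : ℝ) := by
              have : 1 ≤ n - i := by omega
              exact_mod_cast this
            have hd := st4_diff_le hα1 hα2 hni1
              (by linarith : ((n-i:ℕ):ℝ) ≤ ((n-i:ℕ):ℝ) + 1)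
            have hle : ((n - i : ℕ) : ℝ) ^ (α-2) ≤ ((n:ℝ) - K) ^ (α-2) := by
              apply Real.rpow_le_rpow_of_nonpos (by linarith) _ (by linarith)
              have h8 : ((n - i : ℕ) : ℝ) = (n:ℝ) - (i:ℝ) := by
                have h9 : i ≤ n := hi'.le
                push_cast [Nat.cast_sub h9]; ring
              rw [h8]
              have : (i:ℝ) ≤ (K:ℝ) := by exact_mod_cast (by omega : i ≤ K)
              linarith
            calc D i ≤ (α-1) * ((((n-i:ℕ):ℝ) + 1 - ((n-i:ℕ):ℝ)) * ((n-i:ℕ):ℝ) ^ (α-2)) := hd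
              _ = (α-1) * ((n-i:ℕ):ℝ) ^ (α-2) := by ring_nf
              _ ≤ (α-1) * ((n:ℝ) - K) ^ (α-2) :=
                  mul_le_mul_of_nonneg_left hle (by linarith)
          calc D i * |A (i+1) - γ * ((i:ℝ)+1)|
              ≤ D i * (ε * ((i:ℝ)+1) + C₀) :=
                mul_le_mul_of_nonneg_left h1 (hD0 i hi')
            _ = D i * (ε * ((i:ℝ)+1)) + D i * C₀ := by ring
            _ ≤ D i * (ε * ((i:ℝ)+1)) + C₀ * ((α-1) * ((n:ℝ) - K) ^ (α-2)) := by
                have h10 := mul_le_mul_of_nonneg_right hDle hC₀0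
                nlinarith [hD0 i hi']
        · rw [if_neg hiK] at h1
          have hpos : 0 ≤ C₀ * ((α-1) * ((n:ℝ) - K) ^ (α-2)) := by
            have h11 := Real.rpow_nonneg (by linarith : (0:ℝ) ≤ (n:ℝ) - K) (α-2)
            exact mul_nonneg hC₀0 (mul_nonneg (by linarith) h11)
          have h12 := mul_le_mul_of_nonneg_left (by simpa using h1) (hD0 i hi')
          linarith
      have hsum : ∑ i ∈ range n, D i * |A (i+1) - γ * ((i:ℝ)+1)|
          ≤ ε * (W - ((n:ℝ)+1)) + (n:ℝ) * (C₀ * ((α-1) * ((n:ℝ) - K) ^ (α-2))) := by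
        calc ∑ i ∈ range n, D i * |A (i+1) - γ * ((i:ℝ)+1)|
            ≤ ∑ i ∈ range n, (D i * (ε * ((i:ℝ)+1)) + C₀ * ((α-1) * ((n:ℝ) - K) ^ (α-2))) :=
              Finset.sum_le_sum hterm
          _ = (∑ i ∈ range n, D i * (ε * ((i:ℝ)+1)))
              + (n:ℝ) * (C₀ * ((α-1) * ((n:ℝ) - K) ^ (α-2))) := by
              rw [Finset.sum_add_distrib, Finset.sum_const, Finset.card_range, nsmul_eq_mul]
          _ = ε * (W - ((n:ℝ)+1)) + (n:ℝ) * (C₀ * ((α-1) * ((n:ℝ) - K) ^ (α-2))) := by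
              have h13 : ∑ i ∈ range n, D i * (ε * ((i:ℝ)+1))
                  = ε * ∑ i ∈ range n, D i * ((i:ℝ)+1) := by
                rw [Finset.mul_sum]; exact Finset.sum_congr rfl fun i _ => by ring
              rw [h13, hWid]; ring
      have habs : |Sn - γ * W| ≤ ε * W + (n:ℝ) * (C₀ * ((α-1) * ((n:ℝ) - K) ^ (α-2))) := by
        rw [hdiff]
        have h4 : |∑ i ∈ range n, D i * (A (i+1) - γ * ((i:ℝ)+1))|
            ≤ ∑ i ∈ range n, D i * |A (i+1) - γ * ((i:ℝ)+1)| := by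
          refine le_trans (Finset.abs_sum_le_sum_abs _ _) (Finset.sum_le_sum ?_)
          intro i hi
          rw [abs_mul, abs_of_nonneg (hD0 i (mem_range.mp hi))]
        have hc : ((n+1 : ℕ) : ℝ) = (n:ℝ)+1 := by push_cast; ring
        have h5 := hcomb (n+1)
        rw [hc, if_neg (by omega : ¬ (n+1 < K)), add_zero] at h5
        calc |(A (n+1) - γ * ((n:ℝ)+1)) + ∑ i ∈ range n, D i * (A (i+1) - γ * ((i:ℝ)+1))|
            ≤ |A (n+1) - γ * ((n:ℝ)+1)| + |∑ i ∈ range n, D i * (A (i+1) - γ * ((i:ℝ)+1))| :=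
              abs_add_le _ _
          _ ≤ ε * ((n:ℝ)+1) + (ε * (W - ((n:ℝ)+1))
                + (n:ℝ) * (C₀ * ((α-1) * ((n:ℝ) - K) ^ (α-2)))) := by linarith [hsum]
          _ = ε * W + (n:ℝ) * (C₀ * ((α-1) * ((n:ℝ) - K) ^ (α-2))) := by ring
      have hWlb : ((n:ℝ)+1) ^ α / α ≤ W := st4_W_lb hα1 n
      have hWub : W ≤ ((n:ℝ)+1) ^ α := st4_W_ub hα1 n
      have hW0 : 0 ≤ W := le_trans (by positivity) hWlb
      have hrpow_le_one : ((n:ℝ) - K) ^ (α-2) ≤ 1 :=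
        Real.rpow_le_one_of_one_le_of_nonpos (by linarith) (by linarith)
      have hγW : |γ| * W ≤ Cs * ((n:ℝ)+1) + ε * W
          + (n:ℝ) * (C₀ * ((α-1) * ((n:ℝ) - K) ^ (α-2))) := by
        have h6 : |γ| * W = |γ * W| := by rw [abs_mul, abs_of_nonneg hW0]
        have h7 : |γ * W| ≤ |Sn| + |Sn - γ * W| := by
          calc |γ * W| = |Sn - (Sn - γ * W)| := by ring_nf
            _ ≤ |Sn| + |Sn - γ * W| := abs_sub _ _
        have h8 := hS n
        rw [← hSndef] at h8
        calc |γ| * W = |γ * W| := h6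
          _ ≤ |Sn| + |Sn - γ * W| := h7
          _ ≤ Cs * ((n:ℝ)+1) + (ε * W + (n:ℝ) * (C₀ * ((α-1) * ((n:ℝ) - K) ^ (α-2)))) := by
              linarith [habs]
          _ = _ := by ring
      have hnp : (0:ℝ) < ((n:ℝ)+1) ^ α := by positivity
      have hstep : |γ| * (((n:ℝ)+1) ^ α / α) ≤ ε * ((n:ℝ)+1) ^ α
          + (Cs + C₀ * (α-1)) * ((n:ℝ)+1) := by
        have e1 : |γ| * (((n:ℝ)+1) ^ α / α) ≤ |γ| * W :=
          mul_le_mul_of_nonneg_left hWlb (abs_nonneg _)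
        have e2 : ε * W ≤ ε * ((n:ℝ)+1) ^ α := mul_le_mul_of_nonneg_left hWub hε.le
        have e3 : (n:ℝ) * (C₀ * ((α-1) * ((n:ℝ) - K) ^ (α-2)))
            ≤ C₀ * (α-1) * ((n:ℝ)+1) := by
          have hn0 : (0:ℝ) ≤ (n:ℝ) := Nat.cast_nonneg n
          have hq0 : (0:ℝ) ≤ (n:ℝ) * (C₀ * (α-1)) :=
            mul_nonneg hn0 (mul_nonneg hC₀0 (by linarith))
          have t2 : ((n:ℝ) * (C₀ * (α-1))) * ((n:ℝ) - K) ^ (α-2)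
              ≤ ((n:ℝ) * (C₀ * (α-1))) * 1 :=
            mul_le_mul_of_nonneg_left hrpow_le_one hq0
          have t3 : (n:ℝ) * (C₀ * (α-1)) ≤ C₀ * (α-1) * ((n:ℝ)+1) := by
            nlinarith [mul_nonneg hC₀0 (by linarith : (0:ℝ) ≤ α-1)]
          calc (n:ℝ) * (C₀ * ((α-1) * ((n:ℝ) - K) ^ (α-2)))
              = ((n:ℝ) * (C₀ * (α-1))) * ((n:ℝ) - K) ^ (α-2) := by ring
            _ ≤ ((n:ℝ) * (C₀ * (α-1))) * 1 := t2
            _ = (n:ℝ) * (C₀ * (α-1)) := by ring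
            _ ≤ C₀ * (α-1) * ((n:ℝ)+1) := t3
        linarith [hγW]
      have h22 : (ε * ((n:ℝ)+1) ^ α + (Cs + C₀*(α-1)) * ((n:ℝ)+1)) / ((n:ℝ)+1) ^ α
          = ε + (Cs + C₀*(α-1)) * (((n:ℝ)+1) / ((n:ℝ)+1) ^ α) := by
        rw [add_div, mul_div_cancel_right₀ ε (ne_of_gt hnp), mul_div_assoc]
      have hfin : |γ| / α ≤ ε + (Cs + C₀ * (α-1)) * (((n:ℝ)+1) / ((n:ℝ)+1) ^ α) := by
        rw [← h22, le_div_iff₀ hnp]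
        calc |γ| / α * ((n:ℝ)+1) ^ α = |γ| * (((n:ℝ)+1) ^ α / α) := by ring
          _ ≤ _ := hstep
      have hpoweq : ((n:ℝ)+1) / ((n:ℝ)+1) ^ α = ((n:ℝ)+1) ^ (1-α) := by
        rw [Real.rpow_sub (by positivity), Real.rpow_one]
      rw [hpoweq] at hfin
      exact hfin
    have htends : Tendsto (fun n : ℕ => ε + (Cs + C₀ * (α-1)) * ((n:ℝ)+1) ^ (1-α))
        atTop (𝓝 (ε + (Cs + C₀ * (α-1)) * 0)) := by
      apply Tendsto.const_add
      apply Tendsto.const_mul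
      have h1 : Tendsto (fun n : ℕ => (n:ℝ)+1) atTop atTop :=
        tendsto_atTop_add_const_right atTop 1 tendsto_natCast_atTop_atTop
      have h2 : Tendsto (fun y : ℝ => y ^ (-(α-1))) atTop (𝓝 0) :=
        tendsto_rpow_neg_atTop (by linarith)
      have h3 := h2.comp h1
      have h4 : (1-α) = -(α-1) := by ring
      rw [h4]
      exact h3
    rw [mul_zero, add_zero] at htends
    exact ge_of_tendsto htends (eventually_atTop.mpr ⟨K+1, hmain⟩)
  have hq : |γ| / α ≤ 0 := by
    by_contra hq
    push_neg at hq
    have := key (|γ| / α / 2) (by linarith)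
    linarith
  have hab : |γ| ≤ 0 := by
    rw [div_le_iff₀ hαpos] at hq; linarith
  exact abs_eq_zero.mp (le_antisymm hab (abs_nonneg _))


noncomputable def st4B (α : ℝ) (j : ℕ) : ℝ := ∑ i ∈ range j, ((i:ℝ)+1) ^ (α-2)

noncomputable def st4r (α : ℝ) (j : ℕ) : ℝ := st4B α j - (j:ℝ) ^ (α-1) / (α-1)

lemma st4B_succ (α : ℝ) (j : ℕ) : st4B α (j+1) = st4B α j + ((j:ℝ)+1) ^ (α-2) :=
  Finset.sum_range_succ _ _

lemma st4r_anti {α : ℝ} (hα1 : 1 < α) (hα2 : α < 2) (j : ℕ) (hj : 1 ≤ j) :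
    st4r α (j+1) ≤ st4r α j := by
  have hα0 : (0:ℝ) < α - 1 := by linarith
  have hj1 : (1:ℝ) ≤ (j:ℝ) := by exact_mod_cast hj
  have hd := st4_diff_ge hα1 hα2 hj1 (by linarith : (j:ℝ) ≤ (j:ℝ)+1)
  have hc : ((j+1:ℕ):ℝ) = (j:ℝ)+1 := by push_cast; ring
  simp only [st4r, st4B_succ, hc]
  have h1 : ((j:ℝ)+1) ^ (α-2) ≤ (((j:ℝ)+1) ^ (α-1) - (j:ℝ) ^ (α-1)) / (α-1) := by
    rw [le_div_iff₀ hα0]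
    calc ((j:ℝ)+1) ^ (α-2) * (α-1)
        = (α-1) * ((((j:ℝ)+1) - (j:ℝ)) * ((j:ℝ)+1) ^ (α-2)) := by ring
      _ ≤ _ := hd
  have hsub : (((j:ℝ)+1) ^ (α-1) - (j:ℝ) ^ (α-1)) / (α-1)
      = ((j:ℝ)+1) ^ (α-1) / (α-1) - (j:ℝ) ^ (α-1) / (α-1) := by ring
  rw [hsub] at h1
  linarith

lemma st4r_lb {α : ℝ} (hα1 : 1 < α) (hα2 : α < 2) (j : ℕ) :
    -(1/(α-1)) ≤ st4r α j := by
  have hα0 : (0:ℝ) < α - 1 := by linarith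
  have hper : ∀ i : ℕ, ((i:ℝ)+1+1) ^ (α-1) / (α-1) - ((i:ℝ)+1) ^ (α-1) / (α-1)
      ≤ ((i:ℝ)+1) ^ (α-2) := by
    intro i
    have hi1 : (1:ℝ) ≤ (i:ℝ)+1 := by
      have := Nat.cast_nonneg (α := ℝ) i; linarith
    have hd := st4_diff_le hα1 hα2 hi1 (by linarith : (i:ℝ)+1 ≤ (i:ℝ)+1+1)
    rw [div_sub_div_same, div_le_iff₀ hα0]
    calc ((i:ℝ)+1+1) ^ (α-1) - ((i:ℝ)+1) ^ (α-1)
        ≤ (α-1) * ((((i:ℝ)+1+1) - ((i:ℝ)+1)) * ((i:ℝ)+1) ^ (α-2)) := hd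
      _ = ((i:ℝ)+1) ^ (α-2) * (α-1) := by ring
  have hBge : ((j:ℝ)+1) ^ (α-1) / (α-1) - 1 / (α-1) ≤ st4B α j := by
    have hs : ∑ i ∈ range j,
        ((((i+1:ℕ):ℝ)+1) ^ (α-1) / (α-1) - (((i:ℕ):ℝ)+1) ^ (α-1) / (α-1))
        ≤ st4B α j := by
      unfold st4B
      refine Finset.sum_le_sum fun i _ => ?_
      have h5 := hper i
      push_cast
      linarith
    rw [Finset.sum_range_sub (fun i => (((i:ℕ):ℝ)+1) ^ (α-1) / (α-1)) j] at hs
    simp only [Nat.cast_zero, zero_add, Real.one_rpow] at hs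
    exact hs
  have hmono : (j:ℝ) ^ (α-1) ≤ ((j:ℝ)+1) ^ (α-1) :=
    Real.rpow_le_rpow (Nat.cast_nonneg j) (by linarith) (by linarith)
  have hdiv : (j:ℝ) ^ (α-1) / (α-1) ≤ ((j:ℝ)+1) ^ (α-1) / (α-1) := by
    have hinv : (0:ℝ) ≤ (α-1)⁻¹ := by positivity
    simpa [div_eq_mul_inv] using mul_le_mul_of_nonneg_right hmono hinv
  unfold st4r
  linarith

lemma st4r_tendsto {α : ℝ} (hα1 : 1 < α) (hα2 : α < 2) :
    ∃ ρ : ℝ, Tendsto (st4r α) atTop (𝓝 ρ) := by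
  have hanti : Antitone (fun j : ℕ => st4r α (j+1)) :=
    antitone_nat_of_succ_le fun j => st4r_anti hα1 hα2 (j+1) (by omega)
  have hbdd : BddBelow (Set.range (fun j : ℕ => st4r α (j+1))) := by
    refine ⟨-(1/(α-1)), ?_⟩
    rintro y ⟨j, rfl⟩
    exact st4r_lb hα1 hα2 (j+1)
  have := tendsto_atTop_ciInf hanti hbdd
  exact ⟨_, (tendsto_add_atTop_iff_nat 1).mp this⟩

lemma st4_T_id (α : ℝ) (a : ℕ → ℝ) :
    ∀ N : ℕ, ∑ n ∈ range N, (∑ k ∈ range (n+1), a k * (((n - k : ℕ):ℝ)+1) ^ (α-2))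
      = ∑ k ∈ range N, a k * st4B α (N - k)
  | 0 => by simp
  | (N+1) => by
    rw [Finset.sum_range_succ
        (fun n => ∑ k ∈ range (n+1), a k * (((n - k : ℕ):ℝ)+1) ^ (α-2)),
      st4_T_id α a N,
      Finset.sum_range_succ (fun k => a k * st4B α (N+1-k)),
      Finset.sum_range_succ (fun k => a k * (((N - k : ℕ):ℝ)+1) ^ (α-2))]
    have h1 : ∑ k ∈ range N, a k * st4B α (N+1-k)
        = ∑ k ∈ range N, (a k * st4B α (N-k) + a k * (((N - k : ℕ):ℝ)+1) ^ (α-2)) := by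
      refine Finset.sum_congr rfl fun k hk => ?_
      have hk' : k < N := mem_range.mp hk
      have h2 : N + 1 - k = (N - k) + 1 := by omega
      rw [h2, st4B_succ]
      ring
    rw [h1, Finset.sum_add_distrib]
    have h3 : st4B α (N+1-N) = (((N - N : ℕ):ℝ)+1) ^ (α-2) := by
      have : N + 1 - N = 1 := by omega
      rw [this, Nat.sub_self]
      unfold st4B
      simp
    rw [h3]
    ring

lemma st4_full_cesaro (a : ℕ → ℝ) (Ma : ℝ) (hMa : ∀ k, |a k| ≤ Ma)
    (l : ℕ) (hl : 1 ≤ l) (s : ℝ)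
    (hmul : Tendsto (fun N : ℕ => (∑ k ∈ range (N*l), a k) / (N:ℝ)) atTop (𝓝 s)) :
    Tendsto (fun N : ℕ => (∑ k ∈ range N, a k) / (N:ℝ)) atTop (𝓝 (s / l)) := by
  set A : ℕ → ℝ := fun N => ∑ k ∈ range N, a k with hAdef
  have hMa0 : 0 ≤ Ma := le_trans (abs_nonneg _) (hMa 0)
  have hg : Tendsto (fun M : ℕ => |A (M*l) - s*M| / (M:ℝ)) atTop (𝓝 0) := by
    have h1 : Tendsto (fun M : ℕ => A (M*l) / (M:ℝ) - s) atTop (𝓝 0) := by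
      simpa using hmul.sub (tendsto_const_nhds (x := s))
    have h2 := h1.abs
    rw [abs_zero] at h2
    apply h2.congr'
    filter_upwards [eventually_ge_atTop 1] with M hM
    have hM0 : (M:ℝ) ≠ 0 := by
      have : (1:ℝ) ≤ (M:ℝ) := by exact_mod_cast hM
      linarith
    have h3 : A (M*l) / (M:ℝ) - s = (A (M*l) - s*(M:ℝ)) / (M:ℝ) := by
      rw [eq_div_iff hM0, sub_mul, div_mul_cancel₀ _ hM0]
    rw [h3, abs_div, Nat.abs_cast]
  have hdivl : Tendsto (fun N : ℕ => N / l) atTop atTop := by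
    apply tendsto_atTop_atTop.mpr
    intro b
    exact ⟨b * l, fun n hn => (Nat.le_div_iff_mul_le (by omega)).mpr hn⟩
  have hgN : Tendsto (fun N : ℕ => |A ((N/l)*l) - s*(N/l : ℕ)| / ((N/l : ℕ):ℝ)) atTop (𝓝 0) :=
    hg.comp hdivl
  have hconst : Tendsto (fun N : ℕ => (Ma*l + |s|) / (N:ℝ)) atTop (𝓝 0) :=
    tendsto_const_div_atTop_nhds_zero_nat _
  have habs : Tendsto (fun N : ℕ => |A N / (N:ℝ) - s / l|) atTop (𝓝 0) := by
    apply squeeze_zero' (Eventually.of_forall fun N => abs_nonneg _)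
      (g := fun N : ℕ => |A ((N/l)*l) - s*((N/l : ℕ):ℝ)| / ((N/l : ℕ):ℝ) + (Ma*l + |s|) / (N:ℝ))
    swap
    · simpa using hgN.add hconst
    filter_upwards [eventually_ge_atTop l] with N hN
    set M : ℕ := N / l with hMdef
    have hl0 : 0 < l := by omega
    have hM1 : 1 ≤ M := (Nat.le_div_iff_mul_le hl0).mpr (by omega)
    have hMl_le : M * l ≤ N := Nat.div_mul_le_self N l
    have hNpos : 0 < N := by omega
    have hmod : N - M * l < l := by
      have h0 := Nat.div_add_mod N l
      have h1 : l * (N / l) = M * l := by rw [hMdef]; ring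
      have h2 : N % l < l := Nat.mod_lt _ hl0
      omega
    have hMr : (1:ℝ) ≤ (M:ℝ) := by exact_mod_cast hM1
    have hMr0 : (0:ℝ) < (M:ℝ) := by linarith
    have hNr0 : (0:ℝ) < (N:ℝ) := by exact_mod_cast hNpos
    have hMN : (M:ℝ) ≤ (N:ℝ) := by
      exact_mod_cast le_trans (Nat.le_mul_of_pos_right M hl0) hMl_le
    have hcast : ((M*l : ℕ):ℝ) = (M:ℝ) * (l:ℝ) := by push_cast; ring
    have hrem : (N:ℝ) - (M:ℝ)*(l:ℝ) ≤ (l:ℝ) := by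
      have : ((N - M*l : ℕ):ℝ) ≤ (l:ℝ) := by exact_mod_cast hmod.le
      rw [Nat.cast_sub hMl_le, hcast] at this
      linarith
    have hrem0 : (0:ℝ) ≤ (N:ℝ) - (M:ℝ)*(l:ℝ) := by
      have : ((M*l : ℕ):ℝ) ≤ (N:ℝ) := by exact_mod_cast hMl_le
      rw [hcast] at this
      linarith
    have key1 : |A N - A (M*l)| ≤ Ma * l := by
      have hsub : A N - A (M*l) = ∑ k ∈ Finset.Ico (M*l) N, a k := by
        rw [Finset.sum_Ico_eq_sub a hMl_le]
      rw [hsub]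
      calc |∑ k ∈ Finset.Ico (M*l) N, a k| ≤ ∑ k ∈ Finset.Ico (M*l) N, |a k| :=
            Finset.abs_sum_le_sum_abs _ _
        _ ≤ (Finset.Ico (M*l) N).card • Ma :=
            Finset.sum_le_card_nsmul _ _ _ fun k _ => hMa k
        _ = ((N - M*l : ℕ):ℝ) * Ma := by rw [Nat.card_Ico, nsmul_eq_mul]
        _ ≤ Ma * l := by
            have h6 : ((N - M*l : ℕ):ℝ) ≤ (l:ℝ) := by exact_mod_cast hmod.le
            nlinarith [Nat.cast_nonneg (α := ℝ) (N - M*l)]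
    have hlr0 : (0:ℝ) < (l:ℝ) := by exact_mod_cast hl0
    have key2 : |s * (M:ℝ) - (s/l) * N| ≤ |s| := by
      have h7 : s * (M:ℝ) - (s/l) * N = (s/l) * ((M:ℝ)*(l:ℝ) - N) := by
        field_simp
      rw [h7, abs_mul, abs_div, abs_of_nonneg hlr0.le]
      have h8 : |(M:ℝ)*(l:ℝ) - (N:ℝ)| ≤ (l:ℝ) := by
        rw [abs_sub_comm, abs_of_nonneg hrem0]
        exact hrem
      calc |s| / (l:ℝ) * |(M:ℝ)*(l:ℝ) - (N:ℝ)| ≤ |s| / (l:ℝ) * (l:ℝ) := by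
            apply mul_le_mul_of_nonneg_left h8 (by positivity)
        _ = |s| := by field_simp
    have hmain0 : |A N - (s/l) * N| ≤ |A (M*l) - s*(M:ℝ)| + (Ma*l + |s|) := by
      calc |A N - (s/l) * N|
          = |(A N - A (M*l)) + (A (M*l) - s*(M:ℝ)) + (s*(M:ℝ) - (s/l)*N)| := by ring_nf
        _ ≤ |(A N - A (M*l)) + (A (M*l) - s*(M:ℝ))| + |s*(M:ℝ) - (s/l)*N| := abs_add_le _ _
        _ ≤ |A N - A (M*l)| + |A (M*l) - s*(M:ℝ)| + |s*(M:ℝ) - (s/l)*N| := by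
            linarith [abs_add_le (A N - A (M*l)) (A (M*l) - s*(M:ℝ))]
        _ ≤ |A (M*l) - s*(M:ℝ)| + (Ma*l + |s|) := by linarith [key1, key2]
    have heq2 : |A N / (N:ℝ) - s / l| = |A N - (s/l) * N| / (N:ℝ) := by
      have h9 : A N / (N:ℝ) - s/l = (A N - (s/l)*N) / (N:ℝ) := by
        rw [eq_div_iff (ne_of_gt hNr0), sub_mul, div_mul_cancel₀ _ (ne_of_gt hNr0)]
      rw [h9, abs_div, Nat.abs_cast]
    rw [heq2]
    calc |A N - (s/l) * N| / (N:ℝ)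
        ≤ (|A (M*l) - s*(M:ℝ)| + (Ma*l + |s|)) / (N:ℝ) := by gcongr
      _ = |A (M*l) - s*(M:ℝ)| / (N:ℝ) + (Ma*l + |s|) / (N:ℝ) := add_div _ _ _
      _ ≤ |A (M*l) - s*(M:ℝ)| / (M:ℝ) + (Ma*l + |s|) / (N:ℝ) := by
          have h10 : |A (M*l) - s*(M:ℝ)| / (N:ℝ) ≤ |A (M*l) - s*(M:ℝ)| / (M:ℝ) := by
            gcongr
          linarith
  rw [← tendsto_sub_nhds_zero_iff]
  exact (tendsto_zero_iff_abs_tendsto_zero _).mpr habs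


set_option maxHeartbeats 1000000 in
/-- In fractional maps of order `1 < α < 2`, the total of all physical momenta
of asymptotically period-`l` points is zero. -/
theorem stmt_4 (α : ℝ) (hα1 : 1 < α) (hα2 : α < 2) (h : ℝ) (hh : 0 < h)
    (G : ℝ → ℝ) (hG : Continuous G) (p₀ x₀ : ℝ) (x p : ℕ → ℝ)
    (hmapx : ∀ n : ℕ, x (n + 1) =
      x₀ + h * (n + 1) * p₀
        - (h ^ α / Real.Gamma α) *
            ∑ k ∈ Finset.range (n + 1), G (x k) * ((n - k + 1 : ℕ) : ℝ) ^ (α - 1))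
    (hmapp : ∀ n : ℕ, p (n + 1) =
      p₀ - (h ^ (α - 1) / Real.Gamma (α - 1)) *
            ∑ k ∈ Finset.range (n + 1), G (x k) * ((n - k + 1 : ℕ) : ℝ) ^ (α - 2))
    (l : ℕ) (hl : 2 ≤ l) (xlim plim : ℕ → ℝ)
    (hlimx : ∀ m : ℕ, 1 ≤ m → m ≤ l →
      Tendsto (fun N : ℕ => x (N * l + m)) atTop (𝓝 (xlim m)))
    (hlimp : ∀ m : ℕ, 1 ≤ m → m ≤ l →
      Tendsto (fun N : ℕ => p (N * l + m)) atTop (𝓝 (plim m))) :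
    ∑ j ∈ Finset.Icc 1 l, plim j = 0 := by
  have hα0 : (0:ℝ) < α - 1 := by linarith
  have hΓα : 0 < Real.Gamma α := Real.Gamma_pos_of_pos (by linarith)
  have hΓα1 : 0 < Real.Gamma (α-1) := Real.Gamma_pos_of_pos hα0
  have hhα : (0:ℝ) < h ^ α := Real.rpow_pos_of_pos hh α
  have hhα1 : (0:ℝ) < h ^ (α-1) := Real.rpow_pos_of_pos hh _
  set c1 : ℝ := Real.Gamma α / h ^ α with hc1
  set c2 : ℝ := Real.Gamma (α-1) / h ^ (α-1) with hc2
  have hc1pos : 0 < c1 := by positivity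
  have hc2pos : 0 < c2 := by positivity
  -- canonical sums
  have hconv : ∀ (β : ℝ) (n : ℕ),
      ∑ k ∈ Finset.range (n + 1), G (x k) * ((n - k + 1 : ℕ) : ℝ) ^ β
        = ∑ k ∈ range (n+1), G (x k) * (((n - k : ℕ) : ℝ) + 1) ^ β := by
    intro β n
    refine Finset.sum_congr rfl fun k _ => ?_
    have : ((n - k + 1 : ℕ) : ℝ) = ((n - k : ℕ) : ℝ) + 1 := by push_cast; ring
    rw [this]
  -- step 1 : x is bounded
  obtain ⟨Mx, hMx⟩ : ∃ C : ℝ, ∀ n, |x n| ≤ C :=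
    st4_bdd_of_res x l (by omega) (fun m h1 h2 => ⟨xlim m, hlimx m h1 h2⟩)
  -- step 2 : G (x n) is bounded
  obtain ⟨Ma, hMa⟩ : ∃ C : ℝ, ∀ n, |G (x n)| ≤ C := by
    obtain ⟨Cg, hCg⟩ := (isCompact_Icc (a := -Mx) (b := Mx)).exists_bound_of_continuousOn
      hG.continuousOn
    refine ⟨Cg, fun n => ?_⟩
    have hmem : x n ∈ Set.Icc (-Mx) Mx := by
      have := abs_le.mp (hMx n)
      exact Set.mem_Icc.mpr ⟨this.1, this.2⟩
    simpa [Real.norm_eq_abs] using hCg (x n) hmem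
  -- step 3 : solve the map equations for the sums
  have hSx : ∀ n : ℕ, ∑ k ∈ range (n+1), G (x k) * (((n - k : ℕ) : ℝ) + 1) ^ (α-1)
      = c1 * (x₀ + h * ((n:ℝ) + 1) * p₀ - x (n+1)) := by
    intro n
    have hm := hmapx n
    rw [hconv (α-1) n] at hm
    have h1 : (h ^ α / Real.Gamma α)
        * ∑ k ∈ range (n+1), G (x k) * (((n - k : ℕ) : ℝ) + 1) ^ (α-1)
        = x₀ + h * ((n:ℝ) + 1) * p₀ - x (n+1) := by
      rw [hm]; ring
    have hone : c1 * (h ^ α / Real.Gamma α) = 1 := by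
      rw [hc1]; field_simp
    calc ∑ k ∈ range (n+1), G (x k) * (((n - k : ℕ) : ℝ) + 1) ^ (α-1)
        = (c1 * (h ^ α / Real.Gamma α))
          * ∑ k ∈ range (n+1), G (x k) * (((n - k : ℕ) : ℝ) + 1) ^ (α-1) := by
          rw [hone, one_mul]
      _ = c1 * ((h ^ α / Real.Gamma α)
          * ∑ k ∈ range (n+1), G (x k) * (((n - k : ℕ) : ℝ) + 1) ^ (α-1)) := by ring
      _ = c1 * (x₀ + h * ((n:ℝ) + 1) * p₀ - x (n+1)) := by rw [h1]
  have hTp : ∀ n : ℕ, ∑ k ∈ range (n+1), G (x k) * (((n - k : ℕ) : ℝ) + 1) ^ (α-2)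
      = c2 * (p₀ - p (n+1)) := by
    intro n
    have hm := hmapp n
    rw [hconv (α-2) n] at hm
    have h1 : (h ^ (α-1) / Real.Gamma (α-1))
        * ∑ k ∈ range (n+1), G (x k) * (((n - k : ℕ) : ℝ) + 1) ^ (α-2)
        = p₀ - p (n+1) := by
      rw [hm]; ring
    have hone : c2 * (h ^ (α-1) / Real.Gamma (α-1)) = 1 := by
      rw [hc2]; field_simp
    calc ∑ k ∈ range (n+1), G (x k) * (((n - k : ℕ) : ℝ) + 1) ^ (α-2)
        = (c2 * (h ^ (α-1) / Real.Gamma (α-1)))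
          * ∑ k ∈ range (n+1), G (x k) * (((n - k : ℕ) : ℝ) + 1) ^ (α-2) := by
          rw [hone, one_mul]
      _ = c2 * ((h ^ (α-1) / Real.Gamma (α-1))
          * ∑ k ∈ range (n+1), G (x k) * (((n - k : ℕ) : ℝ) + 1) ^ (α-2)) := by ring
      _ = c2 * (p₀ - p (n+1)) := by rw [h1]
  -- step 4 : S n / (n+1) tends to σ := c1 * (h * p₀)
  have htail : Tendsto (fun n : ℕ => c1 * (x₀ - x (n+1)) * (1 / ((n:ℝ)+1))) atTop (𝓝 0) := by
    have hb := Tendsto.const_mul (|c1| * (|x₀| + Mx)) tendsto_one_div_add_atTop_nhds_zero_nat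
    rw [mul_zero] at hb
    apply squeeze_zero_norm _ hb
    intro n
    have h2 : |x₀ - x (n+1)| ≤ |x₀| + Mx := by
      have h4 := hMx (n+1)
      calc |x₀ - x (n+1)| ≤ |x₀| + |x (n+1)| := abs_sub _ _
        _ ≤ |x₀| + Mx := by linarith
    have h3 : (0:ℝ) ≤ 1 / ((n:ℝ)+1) := by positivity
    rw [Real.norm_eq_abs, abs_mul, abs_mul, abs_of_nonneg h3]
    have h5 : |c1| * |x₀ - x (n+1)| ≤ |c1| * (|x₀| + Mx) :=
      mul_le_mul_of_nonneg_left h2 (abs_nonneg c1)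
    exact mul_le_mul_of_nonneg_right h5 h3
  have hSlim : Tendsto
      (fun n : ℕ => (∑ k ∈ range (n+1), G (x k) * (((n - k : ℕ) : ℝ) + 1) ^ (α-1)) / ((n:ℝ)+1))
      atTop (𝓝 (c1 * (h * p₀))) := by
    have hconst : Tendsto (fun _ : ℕ => c1 * (h * p₀)) atTop (𝓝 (c1 * (h * p₀))) :=
      tendsto_const_nhds
    have hsum := hconst.add htail
    rw [add_zero] at hsum
    apply hsum.congr
    intro n
    rw [hSx n]
    have hne : ((n:ℝ)+1) ≠ 0 := by positivity
    field_simp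
    ring
  -- step 5 : linear bound on S
  obtain ⟨Cs, hCs⟩ : ∃ Cs : ℝ, ∀ n : ℕ,
      |∑ k ∈ range (n+1), G (x k) * (((n - k : ℕ) : ℝ) + 1) ^ (α-1)| ≤ Cs * ((n:ℝ)+1) := by
    obtain ⟨Cs, hCs⟩ := hSlim.abs.bddAbove_range
    refine ⟨Cs, fun n => ?_⟩
    have h1 : |(∑ k ∈ range (n+1), G (x k) * (((n - k : ℕ) : ℝ) + 1) ^ (α-1)) / ((n:ℝ)+1)|
        ≤ Cs := hCs (Set.mem_range_self n)
    have hne : (0:ℝ) < (n:ℝ)+1 := by positivity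
    rw [abs_div, abs_of_nonneg hne.le, div_le_iff₀ hne] at h1
    linarith
  -- step 6 : T along residues
  have hTres : ∀ r, r < l → Tendsto
      (fun N : ℕ => ∑ k ∈ range ((N*l+r)+1), G (x k) * ((((N*l+r) - k : ℕ) : ℝ) + 1) ^ (α-2))
      atTop (𝓝 (c2 * (p₀ - plim (r+1)))) := by
    intro r hr
    have hp := hlimp (r+1) (by omega) (by omega)
    have h1 : Tendsto (fun N : ℕ => c2 * (p₀ - p (N*l + (r+1)))) atTop
        (𝓝 (c2 * (p₀ - plim (r+1)))) :=
      Tendsto.const_mul c2 (tendsto_const_nhds.sub hp)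
    apply h1.congr
    intro N
    exact (hTp (N*l+r)).symm
  have hUlim : Tendsto
      (fun N : ℕ => (∑ n ∈ range (N*l),
        ∑ k ∈ range (n+1), G (x k) * (((n - k : ℕ) : ℝ) + 1) ^ (α-2)) / (N:ℝ))
      atTop (𝓝 (∑ r ∈ range l, c2 * (p₀ - plim (r+1)))) :=
    st4_cesaro_res _ l (fun r => c2 * (p₀ - plim (r+1))) hTres
  -- step 7 : a along residues, Cesàro of a, and γ = 0
  have hares : ∀ r : ℕ, ∃ cr : ℝ, r < l →
      Tendsto (fun N : ℕ => G (x (N * l + r))) atTop (𝓝 cr) := by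
    intro r
    by_cases hr0 : r = 0
    · subst hr0
      refine ⟨G (xlim l), fun _ => ?_⟩
      have h0 : Tendsto (fun N : ℕ => x ((N+1)*l)) atTop (𝓝 (xlim l)) := by
        apply (hlimx l (by omega) le_rfl).congr
        intro N
        rw [Nat.succ_mul]
      have h1 : Tendsto (fun N : ℕ => x (N*l)) atTop (𝓝 (xlim l)) :=
        (tendsto_add_atTop_iff_nat 1).mp (by simpa using h0)
      simpa [Function.comp_def] using (hG.tendsto (xlim l)).comp h1
    · by_cases hrl : r < l
      · refine ⟨G (xlim r), fun _ => ?_⟩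
        exact (hG.tendsto (xlim r)).comp (hlimx r (by omega) (by omega))
      · exact ⟨0, fun hc => absurd hc hrl⟩
  choose ca hca using hares
  have hACes : Tendsto (fun N : ℕ => (∑ k ∈ range (N*l), G (x k)) / (N:ℝ)) atTop
      (𝓝 (∑ r ∈ range l, ca r)) :=
    st4_cesaro_res (fun k => G (x k)) l ca (fun r hr => hca r hr)
  have hAfull : Tendsto (fun N : ℕ => (∑ k ∈ range N, G (x k)) / (N:ℝ)) atTop
      (𝓝 ((∑ r ∈ range l, ca r) / l)) :=
    st4_full_cesaro (fun k => G (x k)) Ma hMa l (by omega) _ hACes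
  have hγ0 : (∑ r ∈ range l, ca r) / l = 0 :=
    st4_gamma_zero α hα1 hα2 (fun k => G (x k)) Ma hMa _ hAfull Cs hCs
  rw [hγ0] at hAfull
  -- step 8 : the remainder sequence R N / N tends to 0
  obtain ⟨ρ, hρ⟩ := st4r_tendsto hα1 hα2
  have hεc : Tendsto (fun j : ℕ => |st4r α (j+1) - ρ|) atTop (𝓝 0) := by
    have h1 : Tendsto (fun j : ℕ => st4r α (j+1)) atTop (𝓝 ρ) :=
      (tendsto_add_atTop_iff_nat 1).mpr hρ
    have h2 := (h1.sub (tendsto_const_nhds (x := ρ))).abs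
    simpa using h2
  have hcesε : Tendsto (fun N : ℕ => (N:ℝ)⁻¹ * ∑ j ∈ range N, |st4r α (j+1) - ρ|)
      atTop (𝓝 0) := hεc.cesaro
  have hrefl : ∀ N : ℕ, ∑ k ∈ range N, |st4r α (N-k) - ρ| = ∑ j ∈ range N, |st4r α (j+1) - ρ| := by
    intro N
    rw [← Finset.sum_range_reflect (fun j => |st4r α (j+1) - ρ|) N]
    refine Finset.sum_congr rfl fun k hk => ?_
    have hk' : k < N := mem_range.mp hk
    have : N - 1 - k + 1 = N - k := by omega
    rw [this]
  have hR0 : Tendsto (fun N : ℕ => (∑ k ∈ range N, G (x k) * st4r α (N-k)) / (N:ℝ))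
      atTop (𝓝 0) := by
    have hid : ∀ N : ℕ, (∑ k ∈ range N, G (x k) * st4r α (N-k)) / (N:ℝ)
        = ρ * ((∑ k ∈ range N, G (x k)) / (N:ℝ))
          + (∑ k ∈ range N, G (x k) * (st4r α (N-k) - ρ)) / (N:ℝ) := by
      intro N
      have h1 : ∑ k ∈ range N, G (x k) * st4r α (N-k)
          = ρ * (∑ k ∈ range N, G (x k)) + ∑ k ∈ range N, G (x k) * (st4r α (N-k) - ρ) := by
        rw [Finset.mul_sum, ← Finset.sum_add_distrib]
        exact Finset.sum_congr rfl fun k _ => by ring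
      rw [h1, add_div, mul_div_assoc]
    have hpart1 : Tendsto (fun N : ℕ => ρ * ((∑ k ∈ range N, G (x k)) / (N:ℝ)))
        atTop (𝓝 0) := by
      have := hAfull.const_mul ρ
      rwa [mul_zero] at this
    have hpart2 : Tendsto (fun N : ℕ => (∑ k ∈ range N, G (x k) * (st4r α (N-k) - ρ)) / (N:ℝ))
        atTop (𝓝 0) := by
      have hb := hcesε.const_mul Ma
      rw [mul_zero] at hb
      apply squeeze_zero_norm _ hb
      intro N
      have hMa0 : 0 ≤ Ma := le_trans (abs_nonneg _) (hMa 0)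
      have h2 : |∑ k ∈ range N, G (x k) * (st4r α (N-k) - ρ)|
          ≤ Ma * ∑ j ∈ range N, |st4r α (j+1) - ρ| := by
        calc |∑ k ∈ range N, G (x k) * (st4r α (N-k) - ρ)|
            ≤ ∑ k ∈ range N, |G (x k) * (st4r α (N-k) - ρ)| := Finset.abs_sum_le_sum_abs _ _
          _ ≤ ∑ k ∈ range N, Ma * |st4r α (N-k) - ρ| := by
              refine Finset.sum_le_sum fun k _ => ?_
              rw [abs_mul]
              exact mul_le_mul_of_nonneg_right (hMa k) (abs_nonneg _)
          _ = Ma * ∑ k ∈ range N, |st4r α (N-k) - ρ| := by rw [Finset.mul_sum]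
          _ = Ma * ∑ j ∈ range N, |st4r α (j+1) - ρ| := by rw [hrefl N]
      have hN0 : (0:ℝ) ≤ (N:ℝ) := Nat.cast_nonneg N
      rw [Real.norm_eq_abs, abs_div, abs_of_nonneg hN0]
      rcases Nat.eq_zero_or_pos N with hN | hN
      · subst hN; simp
      · have hNpos : (0:ℝ) < (N:ℝ) := by exact_mod_cast hN
        rw [div_le_iff₀ hNpos]
        calc |∑ k ∈ range N, G (x k) * (st4r α (N-k) - ρ)|
            ≤ Ma * ∑ j ∈ range N, |st4r α (j+1) - ρ| := h2
          _ = Ma * ((N:ℝ)⁻¹ * ∑ j ∈ range N, |st4r α (j+1) - ρ|) * (N:ℝ) := by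
              field_simp
        
    have := hpart1.add hpart2
    rw [add_zero] at this
    exact this.congr fun N => (hid N).symm
  -- step 9 : summation identity
  have hUid : ∀ M : ℕ,
      ∑ n ∈ range (M+1), (∑ k ∈ range (n+1), G (x k) * (((n - k : ℕ):ℝ)+1) ^ (α-2))
      = (∑ k ∈ range (M+1), G (x k) * (((M - k : ℕ):ℝ)+1) ^ (α-1)) / (α-1)
        + ∑ k ∈ range (M+1), G (x k) * st4r α (M+1-k) := by
    intro M
    rw [st4_T_id α (fun k => G (x k)) (M+1)]
    have hsplit : ∀ k ∈ range (M+1),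
        G (x k) * st4B α (M+1-k)
        = G (x k) * (((M - k : ℕ):ℝ)+1) ^ (α-1) / (α-1) + G (x k) * st4r α (M+1-k) := by
      intro k hk
      have hk' : k < M + 1 := mem_range.mp hk
      have hc : ((M - k : ℕ):ℝ) + 1 = ((M+1-k : ℕ):ℝ) := by
        have h7 : (M - k) + 1 = M+1-k := by omega
        exact_mod_cast congrArg (Nat.cast : ℕ → ℝ) h7
      have hB : st4B α (M+1-k) = st4r α (M+1-k) + ((M+1-k:ℕ):ℝ) ^ (α-1) / (α-1) := by
        unfold st4r; ring
      rw [hB, ← hc]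
      ring
    rw [Finset.sum_congr rfl hsplit, Finset.sum_add_distrib, ← Finset.sum_div]
  -- step 10 : limit of U N / N
  have hSshift : Tendsto (fun N : ℕ =>
      (∑ k ∈ range ((N-1)+1), G (x k) * ((((N-1) - k : ℕ):ℝ)+1) ^ (α-1)) / ((N:ℝ)))
      atTop (𝓝 (c1 * (h * p₀))) := by
    have hcmp := hSlim.comp (tendsto_sub_atTop_nat 1)
    apply hcmp.congr'
    filter_upwards [eventually_ge_atTop 1] with N hN
    have hc : ((N-1 : ℕ):ℝ) + 1 = (N:ℝ) := by
      have h7 : (N-1) + 1 = N := by omega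
      exact_mod_cast congrArg (Nat.cast : ℕ → ℝ) h7
    simp only [Function.comp]
    rw [hc]
  have hUtend : Tendsto (fun N : ℕ =>
      (∑ n ∈ range N, (∑ k ∈ range (n+1), G (x k) * (((n - k : ℕ):ℝ)+1) ^ (α-2))) / (N:ℝ))
      atTop (𝓝 (c1 * (h * p₀) * (1/(α-1)))) := by
    have hcomb := (hSshift.mul_const (1/(α-1))).add hR0
    rw [add_zero] at hcomb
    apply hcomb.congr'
    filter_upwards [eventually_ge_atTop 1] with N hN
    obtain ⟨M, rfl⟩ : ∃ M, N = M + 1 := ⟨N-1, by omega⟩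
    simp only [Nat.add_sub_cancel]
    rw [hUid M]
    ring
  -- step 11 : compare along multiples of l
  have hmull : Tendsto (fun N : ℕ => N * l) atTop atTop :=
    tendsto_atTop_mono (fun N => Nat.le_mul_of_pos_right N (by omega)) tendsto_id
  have hUNl := hUtend.comp hmull
  have hUNl2 : Tendsto (fun N : ℕ =>
      (∑ n ∈ range (N*l), (∑ k ∈ range (n+1), G (x k) * (((n - k : ℕ):ℝ)+1) ^ (α-2))) / (N:ℝ))
      atTop (𝓝 (c1 * (h * p₀) * (1/(α-1)) * l)) := by
    have hml := hUNl.mul_const (l:ℝ)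
    apply hml.congr
    intro N
    simp only [Function.comp]
    rcases Nat.eq_zero_or_pos N with hN | hN
    · subst hN; simp
    · have hNr : (0:ℝ) < (N:ℝ) := by exact_mod_cast hN
      have hlr : (0:ℝ) < (l:ℝ) := by exact_mod_cast (by omega : 0 < l)
      have hc : ((N*l : ℕ):ℝ) = (N:ℝ)*(l:ℝ) := by push_cast; ring
      rw [hc, div_mul_eq_mul_div, mul_div_mul_right _ _ (ne_of_gt hlr)]
  have huniq := tendsto_nhds_unique hUlim hUNl2
  -- step 12 : final algebra
  have hΓrel : Real.Gamma α = (α-1) * Real.Gamma (α-1) := by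
    have h7 := Real.Gamma_add_one (ne_of_gt hα0)
    rw [show α - 1 + 1 = α by ring] at h7
    exact h7
  have hhrel : h ^ α = h ^ (α-1) * h := by
    have h8 := Real.rpow_add_one (ne_of_gt hh) (α-1)
    rw [show α - 1 + 1 = α by ring] at h8
    exact h8
  have hc1c2 : c1 * h * (1/(α-1)) = c2 := by
    rw [hc1, hc2, hΓrel, hhrel]
    have hne1 : h ^ (α-1) ≠ 0 := ne_of_gt hhα1
    have hne2 : h ≠ 0 := ne_of_gt hh
    have hne3 : α - 1 ≠ 0 := ne_of_gt hα0
    field_simp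
  have hsumL : ∑ r ∈ range l, c2 * (p₀ - plim (r+1))
      = c2 * ((l:ℝ) * p₀) - c2 * ∑ r ∈ range l, plim (r+1) := by
    calc ∑ r ∈ range l, c2 * (p₀ - plim (r+1))
        = ∑ r ∈ range l, (c2 * p₀ - c2 * plim (r+1)) :=
          Finset.sum_congr rfl fun r _ => by ring
      _ = (l:ℝ) * (c2 * p₀) - c2 * ∑ r ∈ range l, plim (r+1) := by
          rw [Finset.sum_sub_distrib, Finset.sum_const, Finset.card_range, nsmul_eq_mul,
            ← Finset.mul_sum]
      _ = c2 * ((l:ℝ) * p₀) - c2 * ∑ r ∈ range l, plim (r+1) := by ring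
  have h2 : c2 * ((l:ℝ) * p₀) - c2 * ∑ r ∈ range l, plim (r+1) = c2 * p₀ * (l:ℝ) := by
    rw [← hsumL, huniq, ← hc1c2]
    ring
  have hsum0 : ∑ r ∈ range l, plim (r+1) = 0 := by
    have h3 : c2 * ∑ r ∈ range l, plim (r+1) = 0 := by linear_combination (-1 : ℝ) * h2
    exact (mul_eq_zero.mp h3).resolve_left (ne_of_gt hc2pos)
  have hIcc : ∑ j ∈ Finset.Icc 1 l, plim j = ∑ r ∈ range l, plim (r+1) := by
    rw [← Finset.Ico_add_one_right_eq_Icc, Finset.sum_Ico_eq_sum_range]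
    exact Finset.sum_congr rfl fun r _ => by rw [Nat.add_comm]
  rw [hIcc, hsum0]
end

section
/- For every real number α, the falling factorial function is asymptotically a power function: Γ(t+1)/(Γ(t+1−α)·t^α) tends to 1 as the real variable t tends to +∞. -/
open Filter Topology

private lemma lem_ratio (c : ℝ) : Tendsto (fun t : ℝ => (t + c) / t) atTop (𝓝 1) := by
  have h : Tendsto (fun t : ℝ => 1 + c / t) atTop (𝓝 (1 + 0)) :=
    tendsto_const_nhds.add (tendsto_const_nhds.div_atTop tendsto_id)
  rw [add_zero] at h
  refine h.congr' ?_
  filter_upwards [eventually_gt_atTop (0 : ℝ)] with t ht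
  field_simp

private lemma lem_ratio2 (a b : ℝ) : Tendsto (fun t : ℝ => (t + a) / (t + b)) atTop (𝓝 1) := by
  have h := (lem_ratio (a - b)).comp (tendsto_atTop_add_const_right atTop b tendsto_id)
  refine h.congr fun t => ?_
  simp only [Function.comp, id]
  ring_nf

private lemma lem_rpow1 {f : ℝ → ℝ} (s : ℝ) (hf : Tendsto f atTop (𝓝 1)) :
    Tendsto (fun t => f t ^ s) atTop (𝓝 1) := by
  have h := (Real.continuousAt_rpow_const 1 s (Or.inl one_ne_zero)).tendsto.comp hf
  simpa [Function.comp_def, Real.one_rpow] using h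

private lemma gamma_le {x s : ℝ} (hx : 0 < x) (h0 : 0 ≤ s) (h1 : s ≤ 1) :
    Real.Gamma (x + s) ≤ Real.Gamma x ^ (1 - s) * Real.Gamma (x + 1) ^ s := by
  have hx1 : (0 : ℝ) < x + 1 := by linarith
  have h := Real.convexOn_log_Gamma.2 (Set.mem_Ioi.mpr hx) (Set.mem_Ioi.mpr hx1)
    (by linarith : (0:ℝ) ≤ 1 - s) h0 (by ring)
  simp only [smul_eq_mul, Function.comp] at h
  have hxs : (1 - s) * x + s * (x + 1) = x + s := by ring
  rw [hxs] at h
  have hpos : 0 < Real.Gamma (x + s) := Real.Gamma_pos_of_pos (by linarith)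
  calc Real.Gamma (x + s) = Real.exp (Real.log (Real.Gamma (x + s))) := (Real.exp_log hpos).symm
    _ ≤ Real.exp ((1 - s) * Real.log (Real.Gamma x) + s * Real.log (Real.Gamma (x + 1))) :=
        Real.exp_le_exp.mpr h
    _ = Real.Gamma x ^ (1 - s) * Real.Gamma (x + 1) ^ s := by
        rw [Real.exp_add, Real.rpow_def_of_pos (Real.Gamma_pos_of_pos hx),
          Real.rpow_def_of_pos (Real.Gamma_pos_of_pos hx1), mul_comm (Real.log _),
          mul_comm (Real.log _)]

private def P (α : ℝ) : Prop :=
  Tendsto (fun t : ℝ => Real.Gamma (t + 1) / (Real.Gamma (t + 1 - α) * t ^ α)) atTop (𝓝 1)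

private lemma base {s : ℝ} (h0 : 0 ≤ s) (h1 : s ≤ 1) : P s := by
  have hU : Tendsto (fun t : ℝ => ((t + (1 - s)) / t) ^ s) atTop (𝓝 1) :=
    lem_rpow1 s (lem_ratio (1 - s))
  have hL : Tendsto (fun t : ℝ => (t + (1 - s)) / (t + 1) * ((t + 1) / (t + 0)) ^ s)
      atTop (𝓝 (1 * 1)) :=
    (lem_ratio2 (1 - s) 1).mul (lem_rpow1 s (lem_ratio2 1 0))
  rw [mul_one] at hL
  refine tendsto_of_tendsto_of_tendsto_of_le_of_le' hL hU ?_ ?_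
  · -- lower bound
    filter_upwards [eventually_gt_atTop (1 : ℝ)] with t ht
    have ht0 : (0 : ℝ) < t := by linarith
    have hx : (0 : ℝ) < t + 1 - s := by linarith
    have hx' : t + (1 - s) = t + 1 - s := by ring
    have hx1 : (0 : ℝ) < t + 1 := by linarith
    have hA : 0 < Real.Gamma (t + 1) := Real.Gamma_pos_of_pos hx1
    have hB : 0 < Real.Gamma (t + 1 - s) := Real.Gamma_pos_of_pos hx
    -- Wendel lower: (t+1-s) * Γ(t+1-s) ≤ (t+1)^(1-s) * Γ(t+1)
    have hG0 := gamma_le (x := t + 1) (s := 1 - s) hx1 (by linarith) (by linarith)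
    have e1 : t + 1 + (1 - s) = (t + 1 - s) + 1 := by ring
    have e2 : (1 : ℝ) - (1 - s) = s := by ring
    rw [e1, e2, Real.Gamma_add_one hx.ne', Real.Gamma_add_one hx1.ne',
      Real.mul_rpow hx1.le hA.le, ← mul_assoc] at hG0
    have key : Real.Gamma (t + 1) ^ s * (t + 1) ^ (1 - s) * Real.Gamma (t + 1) ^ (1 - s)
        = (t + 1) ^ (1 - s) * Real.Gamma (t + 1) := by
      rw [mul_comm (Real.Gamma (t+1) ^ s), mul_assoc, ← Real.rpow_add hA]
      norm_num
    rw [key] at hG0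
    -- now hG0 : (t+1-s) * Γ(t+1-s) ≤ (t+1)^(1-s) * Γ(t+1)
    have key2 : (t + 1) = (t + 1) ^ s * (t + 1) ^ (1 - s) := by
      rw [← Real.rpow_add hx1]; norm_num
    have hts : (0 : ℝ) < t ^ s := Real.rpow_pos_of_pos ht0 s
    have ht1s : (0 : ℝ) < (t + 1) ^ s := Real.rpow_pos_of_pos hx1 s
    have ht1ms : (0 : ℝ) < (t + 1) ^ (1 - s) := Real.rpow_pos_of_pos hx1 (1 - s)
    rw [hx', add_zero, Real.div_rpow hx1.le ht0.le, div_mul_div_comm,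
      div_le_div_iff₀ (by positivity) (by positivity)]
    -- goal : (t+1-s) * (t+1)^s * (Γ(t+1-s) * t^s) ≤ Γ(t+1) * ((t+1) * t^s)
    rw [show Real.Gamma (t + 1) * ((t + 1) * t ^ s)
        = Real.Gamma (t + 1) * (((t + 1) ^ s * (t + 1) ^ (1 - s)) * t ^ s) from by
      rw [← key2]]
    nlinarith [mul_le_mul_of_nonneg_right hG0 (mul_pos ht1s hts).le]
  · -- upper bound
    filter_upwards [eventually_gt_atTop (1 : ℝ)] with t ht
    have ht0 : (0 : ℝ) < t := by linarith
    have hx : (0 : ℝ) < t + 1 - s := by linarith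
    have hx' : t + (1 - s) = t + 1 - s := by ring
    have hx1 : (0 : ℝ) < t + 1 := by linarith
    have hA : 0 < Real.Gamma (t + 1) := Real.Gamma_pos_of_pos hx1
    have hB : 0 < Real.Gamma (t + 1 - s) := Real.Gamma_pos_of_pos hx
    have hG0 := gamma_le (x := t + 1 - s) (s := s) hx h0 h1
    have e1 : t + 1 - s + s = t + 1 := by ring
    rw [e1, Real.Gamma_add_one hx.ne', Real.mul_rpow hx.le hB.le, ← mul_assoc] at hG0
    have key : Real.Gamma (t + 1 - s) ^ (1 - s) * (t + 1 - s) ^ s * Real.Gamma (t + 1 - s) ^ s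
        = (t + 1 - s) ^ s * Real.Gamma (t + 1 - s) := by
      rw [mul_comm (Real.Gamma (t+1-s) ^ (1-s)), mul_assoc, ← Real.rpow_add hB]
      norm_num
    rw [key] at hG0
    -- hG0 : Γ(t+1) ≤ (t+1-s)^s * Γ(t+1-s)
    have hts : (0 : ℝ) < t ^ s := Real.rpow_pos_of_pos ht0 s
    rw [hx', Real.div_rpow hx.le ht0.le, div_le_div_iff₀ (by positivity) hts]
    nlinarith [mul_le_mul_of_nonneg_right hG0 hts.le]

private lemma step_up {α : ℝ} (h : P α) : P (α + 1) := by
  have h2 : Tendsto (fun t : ℝ =>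
      (Real.Gamma (t + 1) / (Real.Gamma (t + 1 - α) * t ^ α)) * ((t + (-α)) / (t + 0)))
      atTop (𝓝 (1 * 1)) := h.mul (lem_ratio2 (-α) 0)
  rw [mul_one] at h2
  refine h2.congr' ?_
  filter_upwards [eventually_gt_atTop (max 0 α)] with t ht
  have ht0 : (0 : ℝ) < t := lt_of_le_of_lt (le_max_left 0 α) ht
  have htα : (0 : ℝ) < t - α := by
    have := lt_of_le_of_lt (le_max_right 0 α) ht; linarith
  have e1 : t + 1 - (α + 1) = t - α := by ring
  have e2 : t + 1 - α = (t - α) + 1 := by ring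
  rw [e1, Real.rpow_add_one ht0.ne', e2, Real.Gamma_add_one htα.ne']
  have hΓ : Real.Gamma (t - α) ≠ 0 := (Real.Gamma_pos_of_pos htα).ne'
  have hts : t ^ α ≠ 0 := (Real.rpow_pos_of_pos ht0 α).ne'
  rw [add_zero]
  field_simp
  ring

private lemma step_down {α : ℝ} (h : P α) : P (α - 1) := by
  have h2 : Tendsto (fun t : ℝ =>
      (Real.Gamma (t + 1) / (Real.Gamma (t + 1 - α) * t ^ α)) * ((t + 0) / (t + (1 - α))))
      atTop (𝓝 (1 * 1)) := h.mul (lem_ratio2 0 (1 - α))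
  rw [mul_one] at h2
  refine h2.congr' ?_
  filter_upwards [eventually_gt_atTop (max 0 (α - 1))] with t ht
  have ht0 : (0 : ℝ) < t := lt_of_le_of_lt (le_max_left 0 (α - 1)) ht
  have htα : (0 : ℝ) < t + 1 - α := by
    have := lt_of_le_of_lt (le_max_right 0 (α - 1)) ht; linarith
  have e1 : t + 1 - (α - 1) = (t + 1 - α) + 1 := by ring
  rw [e1, Real.rpow_sub_one ht0.ne', Real.Gamma_add_one htα.ne']
  have hΓ : Real.Gamma (t + 1 - α) ≠ 0 := (Real.Gamma_pos_of_pos htα).ne'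
  have hts : t ^ α ≠ 0 := (Real.rpow_pos_of_pos ht0 α).ne'
  have e3 : t + (1 - α) = t + 1 - α := by ring
  rw [add_zero, e3]
  field_simp

/-- The falling factorial is asymptotically a power function:
`Γ(t+1)/(Γ(t+1−α)·t^α) → 1` as `t → +∞`. -/
theorem stmt_8 (α : ℝ) :
    Tendsto (fun t : ℝ => Real.Gamma (t + 1) / (Real.Gamma (t + 1 - α) * t ^ α))
      atTop (𝓝 1) := by
  have key : ∀ n : ℤ, P (Int.fract α + n) := by
    intro n
    induction n using Int.induction_on with
    | zero =>
      have e : Int.fract α + ((0 : ℤ) : ℝ) = Int.fract α := by norm_num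
      rw [e]
      exact base (Int.fract_nonneg α) (Int.fract_lt_one α).le
    | succ n ih =>
      have e : Int.fract α + ((n + 1 : ℤ) : ℝ) = (Int.fract α + (n : ℤ)) + 1 := by
        push_cast; ring
      rw [e]
      exact step_up ih
    | pred n ih =>
      have e : Int.fract α + ((-n - 1 : ℤ) : ℝ) = (Int.fract α + ((-n : ℤ) : ℝ)) - 1 := by
        push_cast; ring
      rw [e]
      exact step_down ih
  have h := key ⌊α⌋
  rw [Int.fract_add_floor] at h
  exact h
end

section
/- Let m ≥ 1 be an integer and let α be a real number with α > m − 1. Define the fractional-difference kernel U_α : ℤ → ℝ by U_α(n) = Γ(n+α−1)/Γ(n) for n ≥ 1 and U_α(n) = 0 for n ≤ 0. Then for every integer n ≥ 1, the (m−1)-st iterated backward difference of U_α satisfies ∑_{i=0}^{m−1} (−1)^i·C(m−1,i)·U_α(n−i) = (Γ(α)/Γ(α−m+1))·Γ(n+α−m)/Γ(n). -/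
open Finset

private lemma key_aux (α : ℝ) (U : ℤ → ℝ)
    (hU : ∀ n : ℤ, 1 ≤ n → U n = Real.Gamma ((n : ℝ) + α - 1) / Real.Gamma (n : ℝ))
    (hU0 : ∀ n : ℤ, n ≤ 0 → U n = 0) :
    ∀ m : ℕ, 1 ≤ m → (m : ℝ) - 1 < α → ∀ n : ℤ, 1 ≤ n →
      ∑ i ∈ Finset.range m, (-1 : ℝ) ^ i * ((m - 1).choose i : ℝ) * U (n - i) =
        Real.Gamma α / Real.Gamma (α - m + 1) *
          Real.Gamma ((n : ℝ) + α - m) / Real.Gamma (n : ℝ) := by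
  intro m hm1
  induction m, hm1 using Nat.le_induction with
  | base =>
    intro hα n hn
    have hα0 : (0:ℝ) < α := by push_cast at hα; linarith
    have hΓα : Real.Gamma α ≠ 0 := (Real.Gamma_pos_of_pos hα0).ne'
    simp only [Finset.sum_range_one, Nat.cast_zero, sub_zero, Nat.sub_self,
      Nat.choose_zero_right, Nat.cast_one, pow_zero, one_mul]
    rw [hU n hn]
    rw [show α - 1 + 1 = α by ring]
    field_simp
  | succ k hk IH =>
    intro hα n hn
    have hα' : (k : ℝ) < α := by push_cast at hα; linarith
    have hIHh : (k : ℝ) - 1 < α := by linarith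
    obtain ⟨j, rfl⟩ : ∃ j, k = j + 1 := ⟨k - 1, (Nat.succ_pred_eq_of_pos hk).symm⟩
    have pascal : ∑ i ∈ Finset.range (j + 1 + 1),
          (-1 : ℝ) ^ i * ((j + 1 + 1 - 1).choose i : ℝ) * U (n - i)
        = (∑ i ∈ Finset.range (j + 1), (-1 : ℝ) ^ i * ((j + 1 - 1).choose i : ℝ) * U (n - i))
          - ∑ i ∈ Finset.range (j + 1),
              (-1 : ℝ) ^ i * ((j + 1 - 1).choose i : ℝ) * U ((n - 1) - i) := by
      rw [Finset.sum_range_succ'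
        (fun i => (-1 : ℝ) ^ i * ((j + 1 + 1 - 1).choose i : ℝ) * U (n - i))]
      simp only [Nat.add_sub_cancel]
      have expand : ∀ i ∈ Finset.range (j + 1),
          (-1 : ℝ) ^ (i + 1) * ((j + 1).choose (i + 1) : ℝ) * U (n - ((i : ℕ) + 1 : ℕ))
          = (-((-1 : ℝ) ^ i * (j.choose i : ℝ) * U ((n - 1) - i)))
            + (-1 : ℝ) ^ (i + 1) * (j.choose (i + 1) : ℝ) * U (n - ((i : ℕ) + 1 : ℕ)) := by
        intro i _
        rw [Nat.choose_succ_succ]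
        have harg : (n - ((i : ℕ) + 1 : ℕ) : ℤ) = (n - 1) - i := by push_cast; ring
        rw [harg]
        push_cast
        ring
      rw [Finset.sum_congr rfl expand, Finset.sum_add_distrib]
      have h2 : (∑ i ∈ Finset.range (j + 1),
            (-1 : ℝ) ^ (i + 1) * (j.choose (i + 1) : ℝ) * U (n - ((i : ℕ) + 1 : ℕ)))
          + (-1 : ℝ) ^ 0 * (((j + 1).choose 0 : ℕ) : ℝ) * U (n - ((0 : ℕ) : ℤ))
          = ∑ i ∈ Finset.range (j + 1), (-1 : ℝ) ^ i * (j.choose i : ℝ) * U (n - i) := by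
        have h3 := Finset.sum_range_succ'
          (fun i => (-1 : ℝ) ^ i * (j.choose i : ℝ) * U (n - i)) (j + 1)
        have h4 := Finset.sum_range_succ
          (fun i => (-1 : ℝ) ^ i * (j.choose i : ℝ) * U (n - i)) (j + 1)
        simp only [Nat.choose_succ_self, Nat.cast_zero, Nat.choose_zero_right,
          Nat.cast_one, mul_zero, zero_mul, add_zero, pow_zero, one_mul] at h3 h4 ⊢
        rw [h4] at h3
        linarith [h3]
      rw [Finset.sum_neg_distrib]
      linarith [h2]
    rw [pascal, IH hIHh n hn]
    rcases eq_or_lt_of_le hn with h1 | h2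
    · -- n = 1
      have hn1 : n = 1 := h1.symm
      subst hn1
      have hz : ∑ i ∈ Finset.range (j + 1),
          (-1 : ℝ) ^ i * ((j + 1 - 1).choose i : ℝ) * U (((1 : ℤ) - 1) - i) = 0 := by
        apply Finset.sum_eq_zero
        intro i _
        rw [hU0 _ (by omega)]
        ring
      rw [hz]
      push_cast at hα' ⊢
      rw [show ((1:ℝ)) + α - ((j:ℝ) + 1) = α - ((j:ℝ)+1) + 1 by ring,
        show ((1:ℝ)) + α - ((j:ℝ) + 1 + 1) = α - ((j:ℝ)+1+1) + 1 by ring]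
      have g1 : Real.Gamma (α - ((j:ℝ)+1) + 1) ≠ 0 :=
        (Real.Gamma_pos_of_pos (by linarith)).ne'
      have g2 : Real.Gamma (α - ((j:ℝ)+1+1) + 1) ≠ 0 :=
        (Real.Gamma_pos_of_pos (by linarith [hα])).ne'
      rw [Real.Gamma_one]
      field_simp
      ring
    · -- n ≥ 2
      have hn2 : (1:ℤ) ≤ n - 1 := by omega
      rw [IH hIHh (n - 1) hn2]
      push_cast at hα' ⊢
      have hnR : (2:ℝ) ≤ (n:ℝ) := by exact_mod_cast h2
      have hβ : (0:ℝ) < α - ((j:ℝ) + 1) := by linarith [hα']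
      have hGn : Real.Gamma ((n:ℝ)) = ((n:ℝ) - 1) * Real.Gamma ((n:ℝ) - 1) := by
        have := Real.Gamma_add_one (s := (n:ℝ) - 1) (by linarith)
        rw [show (n:ℝ) - 1 + 1 = (n:ℝ) by ring] at this
        exact this
      have hGx : Real.Gamma ((n:ℝ) + α - ((j:ℝ)+1)) =
          ((n:ℝ) + α - ((j:ℝ)+1) - 1) * Real.Gamma ((n:ℝ) + α - ((j:ℝ)+1) - 1) := by
        have := Real.Gamma_add_one (s := (n:ℝ) + α - ((j:ℝ)+1) - 1) (by linarith)
        rw [show (n:ℝ) + α - ((j:ℝ)+1) - 1 + 1 = (n:ℝ) + α - ((j:ℝ)+1) by ring] at this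
        exact this
      have hGb : Real.Gamma (α - ((j:ℝ)+1) + 1) =
          (α - ((j:ℝ)+1)) * Real.Gamma (α - ((j:ℝ)+1)) :=
        Real.Gamma_add_one hβ.ne'
      have hΓn1 : Real.Gamma ((n:ℝ) - 1) ≠ 0 :=
        (Real.Gamma_pos_of_pos (by linarith)).ne'
      have hΓβ : Real.Gamma (α - ((j:ℝ)+1)) ≠ 0 := (Real.Gamma_pos_of_pos hβ).ne'
      rw [show (n:ℝ) - 1 + α - ((j:ℝ)+1) = (n:ℝ) + α - ((j:ℝ)+1) - 1 by ring,
        show (n:ℝ) + α - ((j:ℝ) + 1 + 1) = (n:ℝ) + α - ((j:ℝ)+1) - 1 by ring,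
        show α - ((j:ℝ) + 1 + 1) + 1 = α - ((j:ℝ)+1) by ring,
        hGn, hGx, hGb]
      have hn1 : (n:ℝ) - 1 ≠ 0 := by linarith
      field_simp [hn1, hβ.ne', hΓn1, hΓβ]
      ring

/-- The `(m−1)`-st iterated backward difference of the fractional-difference
kernel `U_α(n) = Γ(n+α−1)/Γ(n)` (extended by zero for `n ≤ 0`) equals
`(Γ(α)/Γ(α−m+1))·Γ(n+α−m)/Γ(n)` for all integers `n ≥ 1`. -/
theorem stmt_10 (m : ℕ) (hm : 1 ≤ m) (α : ℝ) (hα : (m : ℝ) - 1 < α)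
    (Uα : ℤ → ℝ)
    (hUα : ∀ n : ℤ, 1 ≤ n → Uα n = Real.Gamma ((n : ℝ) + α - 1) / Real.Gamma (n : ℝ))
    (hUα0 : ∀ n : ℤ, n ≤ 0 → Uα n = 0) :
    ∀ n : ℤ, 1 ≤ n →
      ∑ i ∈ Finset.range m, (-1 : ℝ) ^ i * ((m - 1).choose i : ℝ) * Uα (n - i) =
        (Real.Gamma α / Real.Gamma (α - m + 1)) *
          Real.Gamma ((n : ℝ) + α - m) / Real.Gamma (n : ℝ) := by
  intro n hn
  exact key_aux α Uα hUα hUα0 m hm hα n hn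
end

section
/- For every real α with 0 < α < 1, the fractional-difference-map kernel U_α(n) = Γ(n+α−1)/Γ(n) (for integers n ≥ 1) belongs to D⁰(ℕ₁): the series ∑_{n=1}^∞ Γ(n+α−1)/Γ(n) diverges, while the series ∑_{n=1}^∞ |Γ(n+α)/Γ(n+1) − Γ(n+α−1)/Γ(n)| converges. -/
open Real

/-- Log-convexity of Gamma in multiplicative form. -/
lemma gamma_interp {x y a b : ℝ} (hx : 0 < x) (hy : 0 < y)
    (ha : 0 ≤ a) (hb : 0 ≤ b) (hab : a + b = 1) :
    Real.Gamma (a * x + b * y) ≤ Real.Gamma x ^ a * Real.Gamma y ^ b := by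
  have h := Real.convexOn_log_Gamma.2 (Set.mem_Ioi.mpr hx) (Set.mem_Ioi.mpr hy) ha hb hab
  simp only [smul_eq_mul, Function.comp_apply] at h
  have hxy : 0 < a * x + b * y := by
    rcases eq_or_lt_of_le ha with h1 | h1
    · have hb1 : b = 1 := by linarith
      simpa [← h1, hb1] using hy
    · have : 0 < a * x := mul_pos h1 hx
      nlinarith [mul_nonneg hb hy.le]
  have hGx := Real.Gamma_pos_of_pos hx
  have hGy := Real.Gamma_pos_of_pos hy
  have hGxy := Real.Gamma_pos_of_pos hxy
  calc Real.Gamma (a * x + b * y) = Real.exp (Real.log (Real.Gamma (a * x + b * y))) :=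
        (Real.exp_log hGxy).symm
    _ ≤ Real.exp (a * Real.log (Real.Gamma x) + b * Real.log (Real.Gamma y)) :=
        Real.exp_le_exp.mpr h
    _ = Real.Gamma x ^ a * Real.Gamma y ^ b := by
        rw [Real.exp_add, ← Real.log_rpow hGx, ← Real.log_rpow hGy,
          Real.exp_log (Real.rpow_pos_of_pos hGx a), Real.exp_log (Real.rpow_pos_of_pos hGy b)]

/-- For `0 < α < 1`, the fractional-difference-map kernel
`U_α(n) = Γ(n+α−1)/Γ(n)` belongs to `D⁰(ℕ₁)`: the series `∑_{n≥1} Γ(n+α−1)/Γ(n)`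
diverges while `∑_{n≥1} |Γ(n+α)/Γ(n+1) − Γ(n+α−1)/Γ(n)|` converges. -/
theorem stmt_13 (α : ℝ) (hα0 : 0 < α) (hα1 : α < 1) :
    (¬ Summable (fun n : ℕ =>
        Real.Gamma (((n + 1 : ℕ) : ℝ) + α - 1) / Real.Gamma ((n + 1 : ℕ) : ℝ))) ∧
    Summable (fun n : ℕ =>
      |Real.Gamma (((n + 1 : ℕ) : ℝ) + α) / Real.Gamma ((n + 2 : ℕ) : ℝ)
        - Real.Gamma (((n + 1 : ℕ) : ℝ) + α - 1) / Real.Gamma ((n + 1 : ℕ) : ℝ)|) := by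
  set g : ℕ → ℝ := fun n => Real.Gamma ((n : ℝ) + α) / Real.Gamma ((n : ℝ) + 1) with hg
  have hpos : ∀ n : ℕ, 0 < (n : ℝ) + α := fun n => by positivity
  have hpos1 : ∀ n : ℕ, 0 < (n : ℝ) + 1 := fun n => by positivity
  have hGpos : ∀ n : ℕ, 0 < Real.Gamma ((n : ℝ) + α) := fun n => Real.Gamma_pos_of_pos (hpos n)
  have hG1pos : ∀ n : ℕ, 0 < Real.Gamma ((n : ℝ) + 1) := fun n => Real.Gamma_pos_of_pos (hpos1 n)
  have hgpos : ∀ n : ℕ, 0 < g n := fun n => div_pos (hGpos n) (hG1pos n)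
  -- recurrence
  have hrec : ∀ n : ℕ, g (n + 1) = (((n : ℝ) + α) / ((n : ℝ) + 1)) * g n := by
    intro n
    have h1 : Real.Gamma (((n + 1 : ℕ) : ℝ) + α) = ((n : ℝ) + α) * Real.Gamma ((n : ℝ) + α) := by
      have : ((n + 1 : ℕ) : ℝ) + α = ((n : ℝ) + α) + 1 := by push_cast; ring
      rw [this, Real.Gamma_add_one (hpos n).ne']
    have h2 : Real.Gamma (((n + 1 : ℕ) : ℝ) + 1) = ((n : ℝ) + 1) * Real.Gamma ((n : ℝ) + 1) := by
      have : ((n + 1 : ℕ) : ℝ) + 1 = ((n : ℝ) + 1) + 1 := by push_cast; ring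
      rw [this, Real.Gamma_add_one (hpos1 n).ne']
    simp only [hg, h1, h2]
    field_simp
  have hmono : ∀ n : ℕ, g (n + 1) ≤ g n := by
    intro n
    rw [hrec n]
    have : ((n : ℝ) + α) / ((n : ℝ) + 1) ≤ 1 :=
      (div_le_one (hpos1 n)).mpr (by linarith)
    nlinarith [hgpos n, (hgpos n).le]
  constructor
  · -- divergence
    intro hs
    have hlb : ∀ n : ℕ,
        ((n : ℝ) + 1) ^ (α - 1) ≤ Real.Gamma (((n + 1 : ℕ) : ℝ) + α - 1) /
          Real.Gamma ((n + 1 : ℕ) : ℝ) := by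
      intro n
      have e1 : ((n + 1 : ℕ) : ℝ) + α - 1 = (n : ℝ) + α := by push_cast; ring
      have e2 : ((n + 1 : ℕ) : ℝ) = (n : ℝ) + 1 := by push_cast; ring
      rw [e1, e2]
      -- Γ(n+1) ≤ Γ(n+α) * (n+α)^(1-α)
      have hkey : Real.Gamma ((n : ℝ) + 1) ≤
          Real.Gamma ((n : ℝ) + α) * ((n : ℝ) + α) ^ (1 - α) := by
        have hc : α * ((n : ℝ) + α) + (1 - α) * ((n : ℝ) + α + 1) = (n : ℝ) + 1 := by ring
        have h := gamma_interp (hpos n) (by positivity : (0:ℝ) < (n : ℝ) + α + 1)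
          hα0.le (by linarith : (0:ℝ) ≤ 1 - α) (by ring)
        rw [hc] at h
        have hG : Real.Gamma ((n : ℝ) + α + 1) = ((n : ℝ) + α) * Real.Gamma ((n : ℝ) + α) :=
          Real.Gamma_add_one (hpos n).ne'
        rw [hG, Real.mul_rpow (hpos n).le (hGpos n).le] at h
        calc Real.Gamma ((n : ℝ) + 1) ≤ Real.Gamma ((n : ℝ) + α) ^ α *
              (((n : ℝ) + α) ^ (1 - α) * Real.Gamma ((n : ℝ) + α) ^ (1 - α)) := h
          _ = Real.Gamma ((n : ℝ) + α) * ((n : ℝ) + α) ^ (1 - α) := by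
              rw [show Real.Gamma ((n : ℝ) + α) ^ α *
                  (((n : ℝ) + α) ^ (1 - α) * Real.Gamma ((n : ℝ) + α) ^ (1 - α)) =
                  (Real.Gamma ((n : ℝ) + α) ^ α * Real.Gamma ((n : ℝ) + α) ^ (1 - α)) *
                  ((n : ℝ) + α) ^ (1 - α) by ring,
                ← Real.rpow_add (hGpos n), show α + (1 - α) = 1 by ring, Real.rpow_one]
      have h1 : ((n : ℝ) + α) ^ (α - 1) ≤
          Real.Gamma ((n : ℝ) + α) / Real.Gamma ((n : ℝ) + 1) := by
        rw [le_div_iff₀ (hG1pos n)]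
        calc ((n : ℝ) + α) ^ (α - 1) * Real.Gamma ((n : ℝ) + 1)
            ≤ ((n : ℝ) + α) ^ (α - 1) *
              (Real.Gamma ((n : ℝ) + α) * ((n : ℝ) + α) ^ (1 - α)) :=
              mul_le_mul_of_nonneg_left hkey (by positivity)
          _ = Real.Gamma ((n : ℝ) + α) *
              (((n : ℝ) + α) ^ (α - 1) * ((n : ℝ) + α) ^ (1 - α)) := by ring
          _ = Real.Gamma ((n : ℝ) + α) := by
              rw [← Real.rpow_add (hpos n), show (α - 1) + (1 - α) = 0 by ring,
                Real.rpow_zero, mul_one]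
      refine le_trans ?_ h1
      exact Real.rpow_le_rpow_of_nonpos (hpos n) (by linarith) (by linarith)
    have hsum : Summable (fun n : ℕ => ((n : ℝ) + 1) ^ (α - 1)) :=
      Summable.of_nonneg_of_le (fun n => by positivity) hlb hs
    have : Summable (fun n : ℕ => ((n : ℝ)) ^ (α - 1)) := by
      rw [← summable_nat_add_iff 1]
      convert hsum using 2 with n
      all_goals push_cast; rfl
    rw [Real.summable_nat_rpow] at this
    linarith
  · -- summability of differences
    have heq : ∀ n : ℕ,
        |Real.Gamma (((n + 1 : ℕ) : ℝ) + α) / Real.Gamma ((n + 2 : ℕ) : ℝ)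
          - Real.Gamma (((n + 1 : ℕ) : ℝ) + α - 1) / Real.Gamma ((n + 1 : ℕ) : ℝ)|
        = g n - g (n + 1) := by
      intro n
      have e1 : Real.Gamma (((n + 1 : ℕ) : ℝ) + α) / Real.Gamma ((n + 2 : ℕ) : ℝ) = g (n + 1) := by
        simp only [hg]; norm_num [Nat.cast_add]; ring_nf
      have e2 : Real.Gamma (((n + 1 : ℕ) : ℝ) + α - 1) / Real.Gamma ((n + 1 : ℕ) : ℝ) = g n := by
        simp only [hg]
        have : ((n + 1 : ℕ) : ℝ) + α - 1 = (n : ℝ) + α := by push_cast; ring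
        rw [this]; push_cast; ring_nf
      rw [e1, e2, abs_sub_comm, abs_of_nonneg (by linarith [hmono n])]
    apply Summable.congr _ (fun n => (heq n).symm)
    apply summable_of_sum_range_le (c := g 0) (fun n => by linarith [hmono n])
    intro n
    rw [Finset.sum_range_sub' g n]
    linarith [hgpos n]
end

section
/- Let m ≥ 1 be an integer, let α be real with m − 1 < α < m, let l ≥ 2 be an integer, and let j be an integer with 1 ≤ j < l. Define U^{m−1}_α(n) = Γ(α)·Γ(n+α−m)/(Γ(α−m+1)·Γ(n)) for integers n ≥ 1. Then the series defining the coefficient S^{m−1}_{j+1} converges absolutely and admits the closed form S^{m−1}_{j+1} = ∑_{k=0}^∞ (U^{m−1}_α(lk+j) − U^{m−1}_α(lk+j+1)) = (m−α)·(Γ(α)/Γ(α−m+1))·∑_{k=0}^∞ Γ(lk+j+α−m)/Γ(lk+j+1), with the last series also absolutely convergent. -/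
/-!
With `s = α - m ∈ (-1, 0)`, the functional equation `Γ(x + 1) = x Γ(x)` gives
`Γ(n + s)/Γ(n) - Γ(n + 1 + s)/Γ(n + 1) = -s · Γ(n + s)/Γ(n + 1)`, so the differences of `U` are
the positive terms `(m - α) · Γ(α)/Γ(α - m + 1) · Γ(n + s)/Γ(n + 1)`. These telescope along all
`n ≥ 1` against the nonnegative sequence `Γ(n + s)/Γ(n)`, hence are summable, and the terms with
`n = l k + j` form a subseries.
-/

open Real

theorem summable_sub_succ_of_antitone {f : ℕ → ℝ} (hf : Antitone f) (hf0 : ∀ n, 0 ≤ f n) :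
    Summable fun n => f n - f (n + 1) :=
  summable_of_sum_range_le (fun n => sub_nonneg.2 (hf n.le_succ)) fun n => by
    rw [Finset.sum_range_sub']
    linarith [hf0 n]

theorem Real.Gamma_add_div_Gamma_sub_succ {x s : ℝ} (hx : 0 < x) (hxs : x + s ≠ 0) :
    Gamma (x + s) / Gamma x - Gamma (x + 1 + s) / Gamma (x + 1) =
      -s * (Gamma (x + s) / Gamma (x + 1)) := by
  rw [add_right_comm, Gamma_add_one hxs, Gamma_add_one hx.ne']
  field_simp [(Gamma_pos_of_pos hx).ne']
  ring

theorem Real.summable_Gamma_add_div_Gamma_add_one {s : ℝ} (hs1 : -1 < s) (hs0 : s < 0) :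
    Summable fun n : ℕ => Gamma (n + s) / Gamma (n + 1) := by
  have hpos : ∀ n : ℕ, 0 < (n : ℝ) + 1 + s := fun n => by linarith [n.cast_nonneg (α := ℝ)]
  set V : ℕ → ℝ := fun n => Gamma (n + 1 + s) / Gamma (n + 1)
  have hV : ∀ n, V n - V (n + 1) = -s * (Gamma (n + 1 + s) / Gamma (n + 1 + 1)) := fun n => by
    simpa only [V, Nat.cast_succ] using
      Gamma_add_div_Gamma_sub_succ (x := n + 1) (s := s) (by positivity) (hpos n).ne'
  have hanti : Antitone V := antitone_nat_of_succ_le fun n => by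
    have : 0 < Gamma (n + 1 + s) / Gamma (n + 1 + 1) :=
      div_pos (Gamma_pos_of_pos (hpos n)) (Gamma_pos_of_pos (by positivity))
    nlinarith [hV n]
  have hV0 : ∀ n, 0 ≤ V n := fun n =>
    (div_pos (Gamma_pos_of_pos (hpos n)) (Gamma_pos_of_pos (by positivity))).le
  rw [← summable_nat_add_iff 1]
  refine ((summable_sub_succ_of_antitone hanti hV0).mul_left (-s)⁻¹).congr fun n => ?_
  rw [hV, inv_mul_cancel_left₀ (neg_ne_zero.2 hs0.ne)]
  push_cast
  ring_nf

theorem stmt_15_general (m : ℕ) (α : ℝ) (hα1 : (m : ℝ) - 1 < α) (hα2 : α < m)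
    (l : ℕ) (hl : 2 ≤ l) (j : ℕ) (hj1 : 1 ≤ j)
    (Um1 : ℕ → ℝ)
    (hUm1 : ∀ n : ℕ, 1 ≤ n → Um1 n =
      Real.Gamma α * Real.Gamma ((n : ℝ) + α - m) /
        (Real.Gamma (α - m + 1) * Real.Gamma (n : ℝ))) :
    Summable (fun k : ℕ => |Um1 (l * k + j) - Um1 (l * k + j + 1)|) ∧
    (∑' k : ℕ, (Um1 (l * k + j) - Um1 (l * k + j + 1)) =
      ((m : ℝ) - α) * (Real.Gamma α / Real.Gamma (α - m + 1)) *
        ∑' k : ℕ, Real.Gamma (((l * k + j : ℕ) : ℝ) + α - m) /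
          Real.Gamma (((l * k + j + 1 : ℕ) : ℝ))) ∧
    Summable (fun k : ℕ =>
      |Real.Gamma (((l * k + j : ℕ) : ℝ) + α - m) /
        Real.Gamma (((l * k + j + 1 : ℕ) : ℝ))|) := by
  set a : ℕ → ℝ := fun k => Gamma (((l * k + j : ℕ) : ℝ) + α - m) /
    Gamma (((l * k + j + 1 : ℕ) : ℝ))
  have hinj : Function.Injective fun k => l * k + j :=
    (add_left_injective j).comp (mul_right_injective₀ (by omega))
  have ha : Summable a := by
    have hs := summable_Gamma_add_div_Gamma_add_one (s := α - m) (by linarith) (by linarith)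
    refine (hs.comp_injective hinj).congr fun k => ?_
    simp only [a, Function.comp_apply, Nat.cast_succ, add_sub_assoc]
  have hU : ∀ k, Um1 (l * k + j) - Um1 (l * k + j + 1) =
      ((m : ℝ) - α) * (Gamma α / Gamma (α - m + 1)) * a k := fun k => by
    have hn : (0 : ℝ) < (l * k + j : ℕ) := by norm_cast; omega
    have hshift := Gamma_add_div_Gamma_sub_succ hn (s := α - m) (by
      have : (1 : ℝ) ≤ (l * k + j : ℕ) := by norm_cast; omega
      linarith)
    rw [hUm1 _ (by omega), hUm1 _ (by omega)]
    simp only [a, Nat.cast_succ, ← add_sub_assoc] at hshift ⊢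
    rw [mul_div_mul_comm, mul_div_mul_comm, ← mul_sub, hshift]
    ring
  refine ⟨(ha.mul_left _).abs.congr fun k => by rw [hU], ?_, ha.abs⟩
  rw [tsum_congr hU, tsum_mul_left]

/-- Closed form for the coefficients `S^{m−1}_{j+1}` of fractional difference
maps: the defining series converges absolutely and
`S^{m−1}_{j+1} = (m−α)·(Γ(α)/Γ(α−m+1))·∑ₖ Γ(lk+j+α−m)/Γ(lk+j+1)`, the last
series being absolutely convergent as well. -/
theorem stmt_15 (m : ℕ) (hm : 1 ≤ m) (α : ℝ) (hα1 : (m : ℝ) - 1 < α) (hα2 : α < m)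
    (l : ℕ) (hl : 2 ≤ l) (j : ℕ) (hj1 : 1 ≤ j) (hjl : j < l)
    (Um1 : ℕ → ℝ)
    (hUm1 : ∀ n : ℕ, 1 ≤ n → Um1 n =
      Real.Gamma α * Real.Gamma ((n : ℝ) + α - m) /
        (Real.Gamma (α - m + 1) * Real.Gamma (n : ℝ))) :
    Summable (fun k : ℕ => |Um1 (l * k + j) - Um1 (l * k + j + 1)|) ∧
    (∑' k : ℕ, (Um1 (l * k + j) - Um1 (l * k + j + 1)) =
      ((m : ℝ) - α) * (Real.Gamma α / Real.Gamma (α - m + 1)) *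
        ∑' k : ℕ, Real.Gamma (((l * k + j : ℕ) : ℝ) + α - m) /
          Real.Gamma (((l * k + j + 1 : ℕ) : ℝ))) ∧
    Summable (fun k : ℕ =>
      |Real.Gamma (((l * k + j : ℕ) : ℝ) + α - m) /
        Real.Gamma (((l * k + j + 1 : ℕ) : ℝ))|) :=
  stmt_15_general m α hα1 hα2 l hl j hj1 Um1 hUm1
end

section
/- For every real α with 1 < α < 2, the normalized second difference of the power kernel n^{α−1} satisfies: n^{3−α}·(2·n^{α−1} − (n−1)^{α−1} − (n+1)^{α−1}) tends to (α−1)·(2−α) as the integer n tends to ∞. -/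
open Filter Topology

/-- For `1 < α < 2`, the normalized second difference of the power kernel
`n^{α−1}` satisfies
`n^{3−α}·(2n^{α−1} − (n−1)^{α−1} − (n+1)^{α−1}) → (α−1)(2−α)` as `n → ∞`. -/
theorem stmt_17 (α : ℝ) (hα1 : 1 < α) (hα2 : α < 2) :
    Tendsto (fun n : ℕ =>
        (n : ℝ) ^ (3 - α) *
          (2 * (n : ℝ) ^ (α - 1) - ((n : ℝ) - 1) ^ (α - 1) - ((n : ℝ) + 1) ^ (α - 1)))
      atTop (𝓝 ((α - 1) * (2 - α))) := by
  set p : ℝ := α - 1 with hp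
  have hp0 : 0 < p := by simp [hp]; linarith
  have hp1 : p < 1 := by simp [hp]; linarith
  have hIoo : Set.Ioo (0:ℝ) (1/2) ∈ 𝓝[>] (0:ℝ) :=
    Ioo_mem_nhdsGT_of_mem (by constructor <;> norm_num)
  -- continuous-variable key limit
  have key : Tendsto (fun x : ℝ => (2 - (1-x)^p - (1+x)^p) / x^2) (𝓝[>] (0:ℝ))
      (𝓝 (p * (1 - p))) := by
    -- derivative of numerator
    have hd1 : ∀ x ∈ Set.Ioo (0:ℝ) (1/2),
        HasDerivAt (fun x : ℝ => 2 - (1-x)^p - (1+x)^p)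
          (p * (1+x)^(p-1) * (-1) + p * (1-x)^(p-1)) x := by
      intro x hx
      have hx1 : (1:ℝ) - x ≠ 0 := by nlinarith [hx.1, hx.2]
      have hx2 : (1:ℝ) + x ≠ 0 := by nlinarith [hx.1, hx.2]
      have h1 : HasDerivAt (fun x : ℝ => (1-x)^p) ((-1) * p * (1-x)^(p-1)) x :=
        ((hasDerivAt_id x).const_sub 1).rpow_const (Or.inl hx1)
      have h2 : HasDerivAt (fun x : ℝ => (1+x)^p) (1 * p * (1+x)^(p-1)) x :=
        ((hasDerivAt_id x).const_add 1).rpow_const (Or.inl hx2)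
      have := ((hasDerivAt_const x (2:ℝ)).sub h1).sub h2
      refine this.congr_deriv ?_
      ring
    have hd2 : ∀ x ∈ Set.Ioo (0:ℝ) (1/2),
        HasDerivAt (fun x : ℝ => x^2) (2*x) x := by
      intro x _
      simpa using (hasDerivAt_pow 2 x)
    -- second-level L'Hopital: derivative quotient limit
    have key2 : Tendsto (fun x : ℝ =>
        (p * (1+x)^(p-1) * (-1) + p * (1-x)^(p-1)) / (2*x)) (𝓝[>] (0:ℝ))
        (𝓝 (p * (1 - p))) := by
      have hd1' : ∀ x ∈ Set.Ioo (0:ℝ) (1/2),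
          HasDerivAt (fun x : ℝ => p * (1+x)^(p-1) * (-1) + p * (1-x)^(p-1))
            (-(p*(p-1)) * ((1+x)^(p-2) + (1-x)^(p-2))) x := by
        intro x hx
        have hx1 : (1:ℝ) - x ≠ 0 := by nlinarith [hx.1, hx.2]
        have hx2 : (1:ℝ) + x ≠ 0 := by nlinarith [hx.1, hx.2]
        have h1 : HasDerivAt (fun x : ℝ => (1-x)^(p-1)) ((-1) * (p-1) * (1-x)^(p-1-1)) x :=
          ((hasDerivAt_id x).const_sub 1).rpow_const (Or.inl hx1)
        have h2 : HasDerivAt (fun x : ℝ => (1+x)^(p-1)) (1 * (p-1) * (1+x)^(p-1-1)) x :=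
          ((hasDerivAt_id x).const_add 1).rpow_const (Or.inl hx2)
        have := (((h2.const_mul p).mul_const (-1)).add (h1.const_mul p))
        refine this.congr_deriv ?_
        have e : p - 1 - 1 = p - 2 := by ring
        rw [e] at *
        ring
      have hd2' : ∀ x ∈ Set.Ioo (0:ℝ) (1/2),
          HasDerivAt (fun x : ℝ => 2*x) (2:ℝ) x := by
        intro x _
        simpa using (hasDerivAt_id x).const_mul (2:ℝ)
      apply HasDerivAt.lhopital_zero_nhdsGT
          (Filter.eventually_of_mem hIoo hd1') (Filter.eventually_of_mem hIoo hd2')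
          (Filter.eventually_of_mem hIoo fun x _ => two_ne_zero)
      · -- numerator tends to 0
        have c1 : ContinuousAt (fun x : ℝ => p * (1+x)^(p-1) * (-1) + p * (1-x)^(p-1)) 0 := by
          have h1 : ContinuousAt (fun x : ℝ => (1-x)^(p-1)) 0 :=
            (continuousAt_const.sub continuousAt_id).rpow_const (Or.inl (by norm_num))
          have h2 : ContinuousAt (fun x : ℝ => (1+x)^(p-1)) 0 :=
            (continuousAt_const.add continuousAt_id).rpow_const (Or.inl (by norm_num))
          exact ((h2.const_mul p).mul continuousAt_const).add (h1.const_mul p)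
        have := c1.tendsto
        simpa using this.mono_left nhdsWithin_le_nhds
      · -- denominator tends to 0
        have : Tendsto (fun x : ℝ => 2*x) (𝓝 (0:ℝ)) (𝓝 (2*0)) :=
          (continuous_const.mul continuous_id).tendsto 0
        simpa using this.mono_left nhdsWithin_le_nhds
      · -- quotient of second derivatives
        have c1 : ContinuousAt (fun x : ℝ =>
            (-(p*(p-1)) * ((1+x)^(p-2) + (1-x)^(p-2))) / 2) 0 := by
          have h1 : ContinuousAt (fun x : ℝ => (1-x)^(p-2)) 0 :=
            (continuousAt_const.sub continuousAt_id).rpow_const (Or.inl (by norm_num))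
          have h2 : ContinuousAt (fun x : ℝ => (1+x)^(p-2)) 0 :=
            (continuousAt_const.add continuousAt_id).rpow_const (Or.inl (by norm_num))
          exact ((continuousAt_const.mul (h2.add h1)).div continuousAt_const two_ne_zero)
        have := c1.tendsto.mono_left (nhdsWithin_le_nhds (s := Set.Ioi (0:ℝ)))
        have e : (-(p*(p-1)) * ((1+(0:ℝ))^(p-2) + (1-(0:ℝ))^(p-2))) / 2 = p * (1-p) := by
          norm_num [Real.one_rpow]
          ring
        rw [e] at this
        exact this
    apply HasDerivAt.lhopital_zero_nhdsGT
        (Filter.eventually_of_mem hIoo hd1) (Filter.eventually_of_mem hIoo hd2)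
        (Filter.eventually_of_mem hIoo fun x hx => by have := hx.1; positivity)
    · have c1 : ContinuousAt (fun x : ℝ => 2 - (1-x)^p - (1+x)^p) 0 := by
        have h1 : ContinuousAt (fun x : ℝ => (1-x)^p) 0 :=
          (continuousAt_const.sub continuousAt_id).rpow_const (Or.inl (by norm_num))
        have h2 : ContinuousAt (fun x : ℝ => (1+x)^p) 0 :=
          (continuousAt_const.add continuousAt_id).rpow_const (Or.inl (by norm_num))
        exact (continuousAt_const.sub h1).sub h2
      have := c1.tendsto.mono_left (nhdsWithin_le_nhds (s := Set.Ioi (0:ℝ)))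
      have e : 2 - ((1:ℝ)-0)^p - ((1:ℝ)+0)^p = 0 := by norm_num
      rw [e] at this
      exact this
    · have : Tendsto (fun x : ℝ => x^2) (𝓝 (0:ℝ)) (𝓝 ((0:ℝ)^2)) :=
        (continuous_pow 2).tendsto 0
      simpa using this.mono_left nhdsWithin_le_nhds
    · exact key2
  -- compose with 1/n
  have hseq : Tendsto (fun n : ℕ => ((n:ℝ))⁻¹) atTop (𝓝[>] (0:ℝ)) := by
    rw [tendsto_nhdsWithin_iff]
    constructor
    · simpa [one_div] using (tendsto_one_div_atTop_nhds_zero_nat (𝕜 := ℝ))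
    · filter_upwards [eventually_ge_atTop 1] with n hn
      have : (0:ℝ) < (n:ℝ) := by exact_mod_cast Nat.lt_of_lt_of_le Nat.zero_lt_one hn
      exact inv_pos.2 this
  have comp := key.comp hseq
  have heq : ∀ᶠ n : ℕ in atTop,
      (2 - (1-((n:ℝ))⁻¹)^p - (1+((n:ℝ))⁻¹)^p) / ((n:ℝ))⁻¹^2 =
      (n : ℝ) ^ (3 - α) *
          (2 * (n : ℝ) ^ (α - 1) - ((n : ℝ) - 1) ^ (α - 1) - ((n : ℝ) + 1) ^ (α - 1)) := by
    filter_upwards [eventually_ge_atTop 1] with n hn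
    have hN0 : (0:ℝ) < (n:ℝ) := by exact_mod_cast Nat.lt_of_lt_of_le Nat.zero_lt_one hn
    have hN1 : (1:ℝ) ≤ (n:ℝ) := by exact_mod_cast hn
    have e1 : (1 - ((n:ℝ))⁻¹) = ((n:ℝ)-1)/(n:ℝ) := by field_simp
    have e2 : (1 + ((n:ℝ))⁻¹) = ((n:ℝ)+1)/(n:ℝ) := by field_simp
    rw [e1, e2, Real.div_rpow (by linarith) hN0.le, Real.div_rpow (by linarith) hN0.le]
    have hnp : (0:ℝ) < (n:ℝ)^p := Real.rpow_pos_of_pos hN0 p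
    have h2 : (n:ℝ)^(3-α) = (n:ℝ)^2 / (n:ℝ)^p := by
      rw [eq_div_iff hnp.ne', ← Real.rpow_add hN0, ← Real.rpow_natCast (n:ℝ) 2]
      norm_num [hp]
    rw [h2, hp]
    field_simp
  have hval : p * (1 - p) = (α - 1) * (2 - α) := by rw [hp]; ring
  rw [hval] at comp
  simp only [Function.comp_def] at comp
  exact Tendsto.congr' heq comp
end
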